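/- arXiv:2604.26234 — 9 statements merged into one kernel-verified Lean document; each statement's English description precedes it below -/
import Mathlib

section
/- Suppose m = n and let A = (d_{ij})_{1≤i,j≤n} be the integer matrix whose i-th row is d_i. If gcd(det A, q−1) = 1, then there exist infinitely many integers ℓ ≥ 1 such that L(D, q^ℓ, b_ℓ) is nonempty; in fact one may take every ℓ ≡ 1 (mod r) for a suitable integer r ≥ 1. -/
/-!
Over `ZMod (q^ℓ - 1)` the system `u A ≡ -b_ℓ` has a solution as soon as `det A` is a unit there,
i.e. coprime to `q^ℓ - 1`. If a prime `s ∣ det A` divided `q^ℓ - 1`, then `s ∤ q`, so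
`q^(s-1) ≡ 1 (mod s)` by Fermat; since `s - 1 = φ s ∣ φ |det A|`, every `ℓ ≡ 1 (mod φ |det A|)`
gives `q^ℓ ≡ q (mod s)`, whence `s ∣ q - 1`, contradicting `gcd(det A, q - 1) = 1`.
-/

open Finset

/-- `Lset q ℓ d b` is the set `L(D, q^ℓ, b_ℓ)` of tuples
`u ∈ {0,…,q^ℓ-1}^n` with `∑ uᵢ dᵢ + b_ℓ ≡ 0 (mod q^ℓ - 1)` componentwise,
where `b_ℓ = ((q^ℓ-1)/(q-1))·b`. -/
def Lset (q ℓ : ℕ) {m n : ℕ} (d : Fin n → Fin m → ℤ) (b : Fin m → ℤ) : Set (Fin n → ℕ) :=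
  {u | (∀ i, u i ≤ q ^ ℓ - 1) ∧
    ∀ j, ((q : ℤ) ^ ℓ - 1) ∣
      (∑ i, (u i : ℤ) * d i j + ((q : ℤ) ^ ℓ - 1) / ((q : ℤ) - 1) * b j)}

open Nat in
theorem Nat.Coprime.pow_sub_one_of_modEq_one {a q ℓ : ℕ} (ha : a.Coprime (q - 1)) (hℓ : 1 ≤ ℓ)
    (hmod : ℓ ≡ 1 [MOD φ a]) : a.Coprime (q ^ ℓ - 1) := by
  refine Nat.coprime_of_dvd fun s hs hsa hsq => hs.not_dvd_one ?_
  obtain rfl | hq := Nat.eq_zero_or_pos q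
  · simpa [(Nat.coprime_zero_right a).mp ha] using hsa
  have : Fact s.Prime := ⟨hs⟩
  have hqℓ : (q : ZMod s) ^ ℓ = 1 := by
    rw [← ZMod.natCast_eq_zero_iff, Nat.cast_sub (Nat.one_le_pow _ _ hq)] at hsq
    push_cast at hsq
    exact sub_eq_zero.mp hsq
  have hq0 : (q : ZMod s) ≠ 0 := fun h => by
    simp [h, zero_pow (by omega : ℓ ≠ 0)] at hqℓ
  obtain ⟨k, hk⟩ : s - 1 ∣ ℓ - 1 :=
    (totient_prime hs ▸ totient_dvd_of_dvd hsa).trans ((Nat.modEq_iff_dvd' hℓ).mp hmod.symm)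
  have hq1 : (q : ZMod s) = 1 := by
    rw [← hqℓ, show ℓ = 1 + (s - 1) * k by omega, pow_add, pow_mul,
      ZMod.pow_card_sub_one_eq_one hq0, one_pow, pow_one, mul_one]
  have hsq1 : s ∣ q - 1 := by
    rw [← ZMod.natCast_eq_zero_iff, Nat.cast_sub hq, hq1, Nat.cast_one, sub_self]
  simpa [ha] using Nat.dvd_gcd hsa hsq1

theorem exists_vecMul_add_dvd_of_isCoprime_det {ι : Type*} [Fintype ι] [DecidableEq ι]
    {N : ℕ} [NeZero N] {A : Matrix ι ι ℤ} (hA : IsCoprime A.det N) (c : ι → ℤ) :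
    ∃ u : ι → ℕ, (∀ i, u i < N) ∧ ∀ j, (N : ℤ) ∣ ∑ i, (u i : ℤ) * A i j + c j := by
  set A' := A.map (Int.cast : ℤ → ZMod N)
  have hA' : IsUnit A' := by
    have := hA.map (Int.castRingHom (ZMod N))
    rw [RingHom.map_det, map_natCast, ZMod.natCast_self, isCoprime_zero_right] at this
    exact (Matrix.isUnit_iff_isUnit_det _).mpr this
  obtain ⟨v, hv⟩ := Matrix.vecMul_surjective_iff_isUnit.mpr hA' (-fun j => (c j : ZMod N))
  refine ⟨fun i => (v i).val, fun i => ZMod.val_lt (v i), fun j => ?_⟩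
  rw [← ZMod.intCast_zmod_eq_zero_iff_dvd]
  have hvj := congrFun hv j
  simp only [Matrix.vecMul, dotProduct, A', Matrix.map_apply, Pi.neg_apply] at hvj
  push_cast
  simp only [ZMod.natCast_val, ZMod.cast_id', id, hvj, neg_add_cancel]

theorem Lset_nonempty_of_coprime_det {n q ℓ : ℕ} (d : Fin n → Fin n → ℤ) (b : Fin n → ℤ)
    (hq : 1 < q ^ ℓ) (hd : (Matrix.of d).det.natAbs.Coprime (q ^ ℓ - 1)) :
    (Lset q ℓ d b).Nonempty := by
  have : NeZero (q ^ ℓ - 1) := ⟨by omega⟩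
  have hN : ((q ^ ℓ - 1 : ℕ) : ℤ) = (q : ℤ) ^ ℓ - 1 := by push_cast [Nat.cast_sub hq.le]; rfl
  obtain ⟨u, hu, hdvd⟩ := exists_vecMul_add_dvd_of_isCoprime_det
    (Int.isCoprime_iff_gcd_eq_one.mpr hd) fun j => ((q : ℤ) ^ ℓ - 1) / ((q : ℤ) - 1) * b j
  exact ⟨u, fun i => (hu i).le, fun j => hN ▸ hdvd j⟩

theorem zero_mem_Lset_two {n : ℕ} (ℓ : ℕ) (d : Fin n → Fin n → ℤ) (b : Fin n → ℤ) :
    0 ∈ Lset 2 ℓ d b := by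
  simp [Lset]

theorem stmt0_general (p f n : ℕ) (hp : p.Prime) (hf : 1 ≤ f) (q : ℕ) (hq : q = p ^ f)
    (d : Fin n → Fin n → ℤ) (b : Fin n → ℤ)
    (hA : Int.gcd (Matrix.det (Matrix.of d)) ((q : ℤ) - 1) = 1) :
    {ℓ : ℕ | 1 ≤ ℓ ∧ (Lset q ℓ d b).Nonempty}.Infinite ∧
    ∃ r : ℕ, 1 ≤ r ∧ ∀ ℓ : ℕ, 1 ≤ ℓ → ℓ % r = 1 % r → (Lset q ℓ d b).Nonempty := by
  have hq2 : 2 ≤ q := hq ▸ hp.two_le.trans (Nat.le_self_pow (by omega) p)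
  obtain ⟨r, hr, hL⟩ : ∃ r : ℕ, 1 ≤ r ∧
      ∀ ℓ : ℕ, 1 ≤ ℓ → ℓ % r = 1 % r → (Lset q ℓ d b).Nonempty := by
    by_cases hD : (Matrix.of d).det = 0
    · -- `gcd(0, q - 1) = 1` forces `q = 2`, where `b_ℓ = (2^ℓ - 1) b` is already `≡ 0`
      obtain rfl : q = 2 := by rw [hD, Int.gcd_zero_left] at hA; omega
      exact ⟨1, le_rfl, fun ℓ _ _ => ⟨0, zero_mem_Lset_two ℓ d b⟩⟩
    · rw [show (q : ℤ) - 1 = ((q - 1 : ℕ) : ℤ) by omega] at hA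
      refine ⟨Nat.totient (Matrix.of d).det.natAbs, Nat.totient_pos.mpr (Int.natAbs_pos.mpr hD),
        fun ℓ hℓ hmod => ?_⟩
      exact Lset_nonempty_of_coprime_det d b (Nat.one_lt_pow (by omega) (by omega))
        (Nat.Coprime.pow_sub_one_of_modEq_one hA hℓ hmod)
  refine ⟨Nat.frequently_atTop_iff_infinite.mp ?_, r, hr, hL⟩
  exact ((Nat.frequently_modEq (by omega) 1).and_eventually (Filter.eventually_ge_atTop 1)).mono
    fun ℓ ⟨hmod, hℓ⟩ => ⟨hℓ, hL ℓ hℓ hmod⟩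

/-- If `m = n` and `gcd(det A, q-1) = 1` where `A` is the matrix whose `i`-th row is `dᵢ`,
then there are infinitely many `ℓ ≥ 1` with `L(D, q^ℓ, b_ℓ)` nonempty; in fact there is an
`r ≥ 1` such that every `ℓ ≡ 1 (mod r)` works. -/
theorem stmt0 (p f n : ℕ) (hp : p.Prime) (hf : 1 ≤ f) (hn : 1 ≤ n) (q : ℕ) (hq : q = p ^ f)
    (d : Fin n → Fin n → ℤ) (b : Fin n → ℤ) (hb : ∀ j, 0 ≤ b j ∧ b j ≤ (q : ℤ) - 2)
    (hA : Int.gcd (Matrix.det (Matrix.of d)) ((q : ℤ) - 1) = 1) :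
    {ℓ : ℕ | 1 ≤ ℓ ∧ (Lset q ℓ d b).Nonempty}.Infinite ∧
    ∃ r : ℕ, 1 ≤ r ∧ ∀ ℓ : ℕ, 1 ≤ ℓ → ℓ % r = 1 % r → (Lset q ℓ d b).Nonempty :=
  stmt0_general p f n hp hf q hq d b hA
end

section
/- For every integer ℓ ≥ 1, the set L(D, q^ℓ, b_ℓ) is nonempty if and only if for every prime r and integer e ≥ 1 with r^e exactly dividing q−1, writing r^g for the exact power of r dividing (q^ℓ−1)/(q−1), there exists v ∈ ℤ^n such that Σ_{i=1}^n v_i d_i ≡ r^g·b (mod r^{e+g}) componentwise. -/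
/-!
Reducing a vector `u` with `∑ uᵢ dᵢ + b_ℓ ≡ 0 (mod q^ℓ - 1)` modulo `q^ℓ - 1` shows that
`L(D, q^ℓ, b_ℓ)` is nonempty iff `∑ vᵢ dᵢ ≡ -c·b (mod q^ℓ - 1)` is solvable over `ℤ`, where
`c = (q^ℓ - 1)/(q - 1)`. By the Chinese remainder theorem this linear system is solvable iff it
is solvable modulo every prime power `r^(e+g)` exactly dividing `q^ℓ - 1 = (q - 1)·c`. Writing
`c = r^g·c'` with `c'` prime to `r`, the unit `-c'` can be cancelled, leaving
`∑ vᵢ dᵢ ≡ r^g·b (mod r^(e+g))`; when `e = 0` this holds trivially with `v = 0`.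
-/

open Finset

theorem Nat.Prime.pow_dvd_and_not_pow_succ_dvd_iff {r n e : ℕ} (hr : r.Prime) (hn : n ≠ 0) :
    r ^ e ∣ n ∧ ¬r ^ (e + 1) ∣ n ↔ e = n.factorization r := by
  simp only [hr.pow_dvd_iff_le_factorization hn]
  omega

def SolvableMod {ι κ : Type*} [Fintype ι] (d : ι → κ → ℤ) (N : ℤ) (w : κ → ℤ) : Prop :=
  ∃ v : ι → ℤ, ∀ j, w j ≡ ∑ i, v i * d i j [ZMOD N]

namespace SolvableMod

variable {ι κ : Type*} [Fintype ι] {d : ι → κ → ℤ} {N M : ℤ} {w w' : κ → ℤ}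

theorem iff_exists_dvd :
    SolvableMod d N w ↔ ∃ v : ι → ℤ, ∀ j, N ∣ ∑ i, v i * d i j - w j := by
  simp only [SolvableMod, Int.modEq_iff_dvd]

theorem of_dvd (h : N ∣ M) (hs : SolvableMod d M w) : SolvableMod d N w :=
  let ⟨v, hv⟩ := hs
  ⟨v, fun j => (hv j).of_dvd h⟩

theorem of_forall_dvd (h : ∀ j, N ∣ w j) : SolvableMod d N w :=
  ⟨0, fun j => by simpa [Int.modEq_zero_iff_dvd] using h j⟩

theorem of_modEq (h : ∀ j, w j ≡ w' j [ZMOD N]) (hs : SolvableMod d N w) :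
    SolvableMod d N w' :=
  let ⟨v, hv⟩ := hs
  ⟨v, fun j => (h j).symm.trans (hv j)⟩

theorem smul (s : ℤ) (hs : SolvableMod d N w) : SolvableMod d N (s • w) :=
  let ⟨v, hv⟩ := hs
  ⟨s • v, fun j => by
    simpa only [Pi.smul_apply, smul_eq_mul, mul_assoc, ← mul_sum] using (hv j).mul_left s⟩

theorem smul_iff {s : ℤ} (hs : IsCoprime s N) :
    SolvableMod d N (s • w) ↔ SolvableMod d N w := by
  refine ⟨fun h => ?_, smul s⟩
  obtain ⟨t, u, htu⟩ := hs
  have hts : t * s ≡ 1 [ZMOD N] :=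
    Int.modEq_iff_dvd.mpr ⟨u, by linear_combination -htu⟩
  refine of_modEq (fun j => ?_) (h.smul t)
  simpa only [Pi.smul_apply, smul_eq_mul, mul_assoc, one_mul] using hts.mul_right (w j)

theorem mul (hNM : IsCoprime N M) (hN : SolvableMod d N w) (hM : SolvableMod d M w) :
    SolvableMod d (N * M) w := by
  obtain ⟨v₁, hv₁⟩ := iff_exists_dvd.mp hN
  obtain ⟨v₂, hv₂⟩ := iff_exists_dvd.mp hM
  obtain ⟨x, y, hxy⟩ := id hNM
  -- `y * M ≡ 1 (mod N)` and `x * N ≡ 1 (mod M)`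
  refine iff_exists_dvd.mpr ⟨(y * M) • v₁ + (x * N) • v₂, fun j => ?_⟩
  have key : ∑ i, ((y * M) • v₁ + (x * N) • v₂) i * d i j - w j
      = y * M * (∑ i, v₁ i * d i j - w j) + x * N * (∑ i, v₂ i * d i j - w j) := by
    simp only [Pi.add_apply, Pi.smul_apply, smul_eq_mul, add_mul, sum_add_distrib, mul_assoc,
      ← mul_sum]
    linear_combination w j * hxy
  rw [key]
  exact hNM.mul_dvd
    (dvd_add ((hv₁ j).mul_left _) ((dvd_mul_left N x).mul_right _))
    (dvd_add ((dvd_mul_left M y).mul_right _) ((hv₂ j).mul_left _))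

theorem exists_nat_lt {N : ℕ} (hN : 0 < N) (hs : SolvableMod d N w) :
    ∃ u : ι → ℕ, (∀ i, u i < N) ∧ ∀ j, w j ≡ ∑ i, (u i : ℤ) * d i j [ZMOD N] := by
  obtain ⟨v, hv⟩ := hs
  have hN' : (0 : ℤ) < N := by exact_mod_cast hN
  refine ⟨fun i => (v i % N).toNat, fun i => ?_, fun j => (hv j).trans ?_⟩
  · show (v i % N).toNat < N
    have := Int.emod_lt_of_pos (v i) hN'
    have := Int.emod_nonneg (v i) hN'.ne'
    omega
  · refine (Int.ModEq.sum fun i _ => ?_).symm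
    rw [Int.toNat_of_nonneg (Int.emod_nonneg _ hN'.ne')]
    exact (Int.mod_modEq _ _).mul_right _

theorem iff_forall_prime_pow {N : ℕ} (hN : N ≠ 0) :
    SolvableMod d N w ↔ ∀ r : ℕ, r.Prime → SolvableMod d ↑(r ^ N.factorization r) w := by
  refine ⟨fun h r _ => h.of_dvd (Int.natCast_dvd_natCast.mpr (Nat.ordProj_dvd N r)), fun h => ?_⟩
  induction N using Nat.recOnPosPrimePosCoprime with
  | prime_pow r k hr _ => simpa [hr.factorization_pow] using h r hr
  | zero => exact absurd rfl hN
  | one => exact of_forall_dvd fun _ => by simp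
  | coprime a b _ _ hab iha ihb =>
    have ha : a ≠ 0 := left_ne_zero_of_mul hN
    have hb : b ≠ 0 := right_ne_zero_of_mul hN
    have hfac := Nat.factorization_mul ha hb
    rw [Nat.cast_mul]
    refine mul (Nat.isCoprime_iff_coprime.mpr hab) (iha ha fun r hr => ?_) (ihb hb fun r hr => ?_)
    all_goals exact (h r hr).of_dvd (Int.natCast_dvd_natCast.mpr (pow_dvd_pow r (by simp [hfac])))

theorem neg_natCast_smul_iff {r c E : ℕ} (hr : r.Prime) (hc : c ≠ 0) :
    SolvableMod d ((r : ℤ) ^ (E + c.factorization r)) (-(c : ℤ) • w) ↔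
      SolvableMod d ((r : ℤ) ^ (E + c.factorization r)) ((r : ℤ) ^ c.factorization r • w) := by
  have hcop : IsCoprime (-((ordCompl[r] c : ℕ) : ℤ)) ((r : ℤ) ^ (E + c.factorization r)) := by
    exact_mod_cast (Nat.isCoprime_iff_coprime.mpr
      ((Nat.coprime_ordCompl hr hc).symm.pow_right _)).neg_left
  have hc' : (c : ℤ) = (r : ℤ) ^ c.factorization r * (ordCompl[r] c : ℕ) := by
    exact_mod_cast (Nat.ordProj_mul_ordCompl_eq_self c r).symm
  have hsplit : -(c : ℤ) • w = -((ordCompl[r] c : ℕ) : ℤ) • ((r : ℤ) ^ c.factorization r • w) := by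
    rw [smul_smul, hc', mul_comm, neg_mul]
  rw [hsplit, smul_iff hcop]

end SolvableMod

theorem lset_nonempty_iff {q ℓ m n : ℕ} (d : Fin n → Fin m → ℤ) (b : Fin m → ℤ) (h : 1 < q ^ ℓ) :
    (Lset q ℓ d b).Nonempty ↔
      SolvableMod d ↑(q ^ ℓ - 1) (-(((q ^ ℓ - 1) / (q - 1) : ℕ) : ℤ) • b) := by
  have hq : 1 ≤ q := Nat.pos_of_ne_zero fun h0 => by
    rcases ℓ with _ | ℓ <;> simp [h0] at h
  have hcast : (((q ^ ℓ - 1) / (q - 1) : ℕ) : ℤ) = ((q : ℤ) ^ ℓ - 1) / ((q : ℤ) - 1) := by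
    rw [Int.natCast_div, Nat.cast_sub h.le, Nat.cast_sub hq]
    push_cast
    rfl
  have hQ : ((q ^ ℓ - 1 : ℕ) : ℤ) = (q : ℤ) ^ ℓ - 1 := by
    push_cast [Nat.cast_sub h.le]
    rfl
  constructor
  · rintro ⟨u, -, hu⟩
    refine SolvableMod.iff_exists_dvd.mpr ⟨fun i => u i, fun j => ?_⟩
    simpa [hcast, hQ] using hu j
  · intro hs
    obtain ⟨u, hu_lt, hu⟩ := hs.exists_nat_lt (by omega)
    refine ⟨u, fun i => by have := hu_lt i; omega, fun j => ?_⟩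
    simpa [hcast, hQ] using (hu j).dvd

theorem stmt2_general (p f m n : ℕ) (hp : p.Prime) (hf : 1 ≤ f)
    (q : ℕ) (hq : q = p ^ f)
    (d : Fin n → Fin m → ℤ) (b : Fin m → ℤ)
    (ℓ : ℕ) (hℓ : 1 ≤ ℓ) :
    (Lset q ℓ d b).Nonempty ↔
      ∀ r e g : ℕ, r.Prime → 1 ≤ e →
        r ^ e ∣ q - 1 → ¬ r ^ (e + 1) ∣ q - 1 →
        r ^ g ∣ (q ^ ℓ - 1) / (q - 1) → ¬ r ^ (g + 1) ∣ (q ^ ℓ - 1) / (q - 1) →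
        ∃ v : Fin n → ℤ, ∀ j,
          ((r : ℤ) ^ (e + g)) ∣ (∑ i, v i * d i j - (r : ℤ) ^ g * b j) := by
  have hq2 : 2 ≤ q := hq ▸ hp.two_le.trans (Nat.le_self_pow (by omega) p)
  have hqℓ : 1 < q ^ ℓ := Nat.one_lt_pow (by omega) hq2
  set c := (q ^ ℓ - 1) / (q - 1)
  have hQ : q ^ ℓ - 1 = (q - 1) * c :=
    (Nat.mul_div_cancel' (by simpa using Nat.sub_dvd_pow_sub_pow q 1 ℓ)).symm
  have hq1 : q - 1 ≠ 0 := by omega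
  have hc : c ≠ 0 := by
    rintro h0
    rw [h0, mul_zero] at hQ
    omega
  have hfac (r : ℕ) : (q ^ ℓ - 1).factorization r = (q - 1).factorization r + c.factorization r := by
    rw [hQ, Nat.factorization_mul hq1 hc, Finsupp.add_apply]
  rw [lset_nonempty_iff d b hqℓ, SolvableMod.iff_forall_prime_pow (by omega)]
  constructor
  · rintro h r e g hr - hdq hndq hdc hndc
    obtain rfl := (hr.pow_dvd_and_not_pow_succ_dvd_iff hq1).mp ⟨hdq, hndq⟩
    obtain rfl := (hr.pow_dvd_and_not_pow_succ_dvd_iff hc).mp ⟨hdc, hndc⟩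
    have := h r hr
    rw [hfac, Nat.cast_pow, SolvableMod.neg_natCast_smul_iff hr hc] at this
    exact SolvableMod.iff_exists_dvd.mp this
  · intro h r hr
    rw [hfac, Nat.cast_pow, SolvableMod.neg_natCast_smul_iff hr hc]
    rcases Nat.eq_zero_or_pos ((q - 1).factorization r) with h0 | hpos
    · rw [h0, zero_add]
      exact SolvableMod.of_forall_dvd fun j => dvd_mul_right _ _
    · exact SolvableMod.iff_exists_dvd.mpr (h r _ _ hr hpos (Nat.ordProj_dvd _ _)
        (Nat.pow_succ_factorization_not_dvd hq1 hr) (Nat.ordProj_dvd _ _)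
        (Nat.pow_succ_factorization_not_dvd hc hr))

/-- `L(D, q^ℓ, b_ℓ)` is nonempty iff for every prime power `r^e` exactly dividing `q-1`
(with `e ≥ 1`), writing `r^g` for the exact power of `r` dividing `(q^ℓ-1)/(q-1)`,
there is `v ∈ ℤ^n` with `∑ vᵢ dᵢ ≡ r^g·b (mod r^{e+g})` componentwise. -/
theorem stmt2 (p f m n : ℕ) (hp : p.Prime) (hf : 1 ≤ f) (hm : 1 ≤ m) (hn : 1 ≤ n)
    (q : ℕ) (hq : q = p ^ f)
    (d : Fin n → Fin m → ℤ) (b : Fin m → ℤ) (hb : ∀ j, 0 ≤ b j ∧ b j ≤ (q : ℤ) - 2)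
    (ℓ : ℕ) (hℓ : 1 ≤ ℓ) :
    (Lset q ℓ d b).Nonempty ↔
      ∀ r e g : ℕ, r.Prime → 1 ≤ e →
        r ^ e ∣ q - 1 → ¬ r ^ (e + 1) ∣ q - 1 →
        r ^ g ∣ (q ^ ℓ - 1) / (q - 1) → ¬ r ^ (g + 1) ∣ (q ^ ℓ - 1) / (q - 1) →
        ∃ v : Fin n → ℤ, ∀ j,
          ((r : ℤ) ^ (e + g)) ∣ (∑ i, v i * d i j - (r : ℤ) ^ g * b j) :=
  stmt2_general p f m n hp hf q hq d b ℓ hℓ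
end

section
/- If Λ(D, b) is nonempty, then there exists an integer ℓ₀ ≥ 1, all of whose prime factors divide q−1, such that Λ(D, b) = { kℓ₀ : k ∈ ℤ, k ≥ 1 }. -/
open Finset

/-- `Λ(D, b)` is the set of `ℓ ≥ 1` with `L(D, q^ℓ, b_ℓ)` nonempty. -/
def Lambda (q : ℕ) {m n : ℕ} (d : Fin n → Fin m → ℤ) (b : Fin m → ℤ) : Set ℕ :=
  {ℓ | 1 ≤ ℓ ∧ (Lset q ℓ d b).Nonempty}

/-!
Write `T_ℓ = (q^ℓ - 1)/(q - 1) = ∑_{i<ℓ} q^i` and `N_ℓ = q^ℓ - 1`. Reducing a solution modulo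
`N_ℓ`, `ℓ ∈ Λ(D, b)` iff `T_ℓ` lies in the ideal `I(N_ℓ)` of those `t ∈ ℤ` for which
`∑ uᵢ dᵢ + t b ≡ 0 (mod N)` has an integer solution `u`.

Replacing `ℓ` by `kℓ` multiplies both `T_ℓ` and `N_ℓ` by `G = ∑_{i<k} q^{ℓi}`, so `Λ` is closed
under multiples. Since `I(N)` only grows when `N` is replaced by a divisor, and
`gcd(T_a, T_b) = T_{gcd(a,b)}` (from `gcd(q^a - 1, q^b - 1) = q^{gcd(a,b)} - 1`), `Λ` is closed
under `gcd`; hence `Λ` is the set of multiples of its least element `ℓ₀`. Finally `G ≡ k`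
modulo `q - 1`, so when `k` is coprime to `q - 1`, `T_ℓ` is an integer combination of
`T_{kℓ} = T_ℓ G` and `N_ℓ = T_ℓ (q - 1)`: a prime factor of `ℓ₀` not dividing `q - 1` could be
removed from `ℓ₀`, contradicting minimality.
-/

section SolvableIdeal

variable {m n : ℕ} (d : Fin n → Fin m → ℤ) (b : Fin m → ℤ)

def solvableIdeal (N : ℤ) : Ideal ℤ where
  carrier := {t | ∃ u : Fin n → ℤ, ∀ j, N ∣ ∑ i, u i * d i j + t * b j}
  add_mem' := by
    rintro t t' ⟨u, hu⟩ ⟨u', hu'⟩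
    refine ⟨u + u', fun j => (dvd_add (hu j) (hu' j)).trans (dvd_of_eq ?_)⟩
    simp only [Pi.add_apply, add_mul, sum_add_distrib]
    ring
  zero_mem' := ⟨0, fun j => by simp⟩
  smul_mem' := by
    rintro c t ⟨u, hu⟩
    refine ⟨c • u, fun j => ((hu j).mul_left c).trans (dvd_of_eq ?_)⟩
    simp only [Pi.smul_apply, smul_eq_mul, mul_add, mul_sum, mul_assoc]

variable {d b}

lemma mem_solvableIdeal_of_dvd {N t : ℤ} (h : N ∣ t) : t ∈ solvableIdeal d b N :=
  ⟨0, fun j => by simpa using h.mul_right (b j)⟩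

lemma solvableIdeal_le_of_dvd {N N' : ℤ} (h : N' ∣ N) :
    solvableIdeal d b N ≤ solvableIdeal d b N' :=
  fun _ ⟨u, hu⟩ => ⟨u, fun j => h.trans (hu j)⟩

lemma mul_mem_solvableIdeal_mul {N t : ℤ} (h : t ∈ solvableIdeal d b N) (c : ℤ) :
    t * c ∈ solvableIdeal d b (N * c) := by
  obtain ⟨u, hu⟩ := h
  refine ⟨u * fun _ => c, fun j => (mul_dvd_mul_right (hu j) c).trans (dvd_of_eq ?_)⟩
  simp only [Pi.mul_apply, add_mul, sum_mul, mul_right_comm _ c]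

lemma exists_nat_lt_of_mem_solvableIdeal {N t : ℤ} (hN : 0 < N)
    (h : t ∈ solvableIdeal d b N) :
    ∃ u : Fin n → ℕ, (∀ i, (u i : ℤ) < N) ∧ ∀ j, N ∣ ∑ i, (u i : ℤ) * d i j + t * b j := by
  obtain ⟨u, hu⟩ := h
  have hcast : ∀ i, ((u i % N).toNat : ℤ) = u i % N :=
    fun i => Int.toNat_of_nonneg (Int.emod_nonneg _ hN.ne')
  refine ⟨fun i => (u i % N).toNat, fun i => ?_, fun j => ?_⟩
  · rw [hcast]
    exact Int.emod_lt_of_pos _ hN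
  · refine ((Int.ModEq.sum fun i _ => ?_).add_right _).dvd_iff.2 (hu j)
    rw [hcast]
    exact (Int.mod_modEq _ _).mul_right _

end SolvableIdeal

lemma geom_sum_range_mul {R : Type*} [CommSemiring R] (x : R) (k ℓ : ℕ) :
    ∑ i ∈ range (k * ℓ), x ^ i = (∑ i ∈ range ℓ, x ^ i) * ∑ i ∈ range k, (x ^ ℓ) ^ i := by
  induction k with
  | zero => simp
  | succ k ih =>
    rw [Nat.succ_mul, sum_range_add, ih, sum_range_succ, mul_add, mul_comm _ ((x ^ ℓ) ^ k)]
    simp only [pow_add, ← pow_mul, mul_sum, mul_comm ℓ k]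

lemma geom_sum_sub_card_dvd {R : Type*} [CommRing R] (x : R) (k : ℕ) :
    x - 1 ∣ ∑ i ∈ range k, x ^ i - k := by
  simpa [sum_sub_distrib] using
    dvd_sum fun i (_ : i ∈ range k) => sub_one_dvd_pow_sub_one x i

lemma Nat.gcd_geom_sum {q : ℕ} (hq : 2 ≤ q) (a b : ℕ) :
    Nat.gcd (∑ i ∈ range a, q ^ i) (∑ i ∈ range b, q ^ i) = ∑ i ∈ range (a.gcd b), q ^ i := by
  refine Nat.eq_of_mul_eq_mul_right (show 0 < q - 1 by omega) ?_
  rw [← Nat.gcd_mul_right]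
  simp only [geom_sum_mul_of_one_le (show 1 ≤ q by omega), Nat.pow_sub_one_gcd_pow_sub_one]

lemma Nat.eq_setOf_mul_sInf {S : Set ℕ} (hne : S.Nonempty) (hpos : ∀ x ∈ S, 1 ≤ x)
    (hgcd : ∀ x ∈ S, ∀ y ∈ S, x.gcd y ∈ S) (hmul : ∀ x ∈ S, ∀ k, 1 ≤ k → k * x ∈ S) :
    S = {x | ∃ k, 1 ≤ k ∧ x = k * sInf S} := by
  have hmin := Nat.sInf_mem hne
  ext x
  refine ⟨fun hx => ?_, fun ⟨k, hk, hx⟩ => hx ▸ hmul _ hmin k hk⟩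
  have hgcd_eq : x.gcd (sInf S) = sInf S :=
    le_antisymm (Nat.le_of_dvd (hpos _ hmin) (Nat.gcd_dvd_right _ _))
      (Nat.sInf_le (hgcd x hx _ hmin))
  obtain ⟨k, hk⟩ := hgcd_eq ▸ Nat.gcd_dvd_left x (sInf S)
  refine ⟨k, Nat.pos_of_ne_zero ?_, hk.trans (mul_comm _ _)⟩
  rintro rfl
  simpa [hk] using hpos x hx

section LevelSolvable

variable {m n : ℕ} (d : Fin n → Fin m → ℤ) (b : Fin m → ℤ)

def LevelSolvable (q : ℤ) (ℓ : ℕ) : Prop :=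
  ∑ i ∈ range ℓ, q ^ i ∈ solvableIdeal d b (q ^ ℓ - 1)

variable {d b}

lemma LevelSolvable.mul_left {q : ℤ} {ℓ : ℕ} (h : LevelSolvable d b q ℓ) (k : ℕ) :
    LevelSolvable d b q (k * ℓ) := by
  unfold LevelSolvable
  rw [geom_sum_range_mul, mul_comm k, pow_mul, ← mul_geom_sum]
  exact mul_mem_solvableIdeal_mul h _

lemma LevelSolvable.of_mul_left {q : ℤ} {k ℓ : ℕ} (hk : IsCoprime (k : ℤ) (q - 1))
    (h : LevelSolvable d b q (k * ℓ)) : LevelSolvable d b q ℓ := by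
  unfold LevelSolvable at h ⊢
  set T := ∑ i ∈ range ℓ, q ^ i
  set G := ∑ i ∈ range k, (q ^ ℓ) ^ i
  have hG : IsCoprime G (q - 1) := by
    obtain ⟨c, hc⟩ := (sub_one_dvd_pow_sub_one q ℓ).trans (geom_sum_sub_card_dvd (q ^ ℓ) k)
    simpa [G, sub_eq_iff_eq_add'.1 hc] using hk.add_mul_left_left c
  rw [geom_sum_range_mul, mul_comm k, pow_mul, ← mul_geom_sum] at h
  have hTG : T * G ∈ solvableIdeal d b (q ^ ℓ - 1) :=
    solvableIdeal_le_of_dvd (dvd_mul_right _ _) h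
  have hTq : T * (q - 1) ∈ solvableIdeal d b (q ^ ℓ - 1) :=
    mem_solvableIdeal_of_dvd (geom_sum_mul q ℓ).symm.dvd
  obtain ⟨x, y, hxy⟩ := hG
  have hT : T = x * (T * G) + y * (T * (q - 1)) := by linear_combination T * hxy.symm
  rw [hT]
  exact add_mem (Ideal.mul_mem_left _ _ hTG) (Ideal.mul_mem_left _ _ hTq)

lemma LevelSolvable.of_prime_mul {q : ℕ} (hq : 1 ≤ q) {r ℓ : ℕ} (hr : r.Prime)
    (hrq : ¬ r ∣ q - 1) (h : LevelSolvable d b q (r * ℓ)) : LevelSolvable d b q ℓ := by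
  have hcop := Nat.isCoprime_iff_coprime.2 ((Nat.Prime.coprime_iff_not_dvd hr).2 hrq)
  rw [Nat.cast_sub hq, Nat.cast_one] at hcop
  exact h.of_mul_left hcop

lemma LevelSolvable.gcd {q : ℕ} (hq : 2 ≤ q) {ℓ ℓ' : ℕ} (h : LevelSolvable d b q ℓ)
    (h' : LevelSolvable d b q ℓ') : LevelSolvable d b q (ℓ.gcd ℓ') := by
  unfold LevelSolvable at h h' ⊢
  have hle {k : ℕ} (hk : ℓ.gcd ℓ' ∣ k) :
      solvableIdeal d b ((q : ℤ) ^ k - 1) ≤ solvableIdeal d b ((q : ℤ) ^ ℓ.gcd ℓ' - 1) :=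
    solvableIdeal_le_of_dvd (dvd_pow_sub_one_of_dvd hk)
  have hbezout :=
    Int.gcd_eq_gcd_ab (∑ i ∈ range ℓ, (q : ℤ) ^ i) (∑ i ∈ range ℓ', (q : ℤ) ^ i)
  simp only [← Nat.cast_pow, ← Nat.cast_sum, Int.gcd_natCast_natCast, Nat.gcd_geom_sum hq]
    at hbezout
  push_cast at hbezout
  rw [hbezout]
  exact add_mem (Ideal.mul_mem_right _ _ (hle (Nat.gcd_dvd_left ℓ ℓ') h))
    (Ideal.mul_mem_right _ _ (hle (Nat.gcd_dvd_right ℓ ℓ') h'))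

lemma Lambda_eq {q : ℕ} (hq : 2 ≤ q) :
    Lambda q d b = {ℓ | 1 ≤ ℓ ∧ LevelSolvable d b q ℓ} := by
  ext ℓ
  have hT : ((q : ℤ) ^ ℓ - 1) / ((q : ℤ) - 1) = ∑ i ∈ range ℓ, (q : ℤ) ^ i :=
    Int.ediv_eq_of_eq_mul_left (by omega) (geom_sum_mul _ _).symm
  simp only [Lambda, Lset, Set.mem_ofPred_eq, hT]
  refine and_congr_right fun hℓ => ⟨fun ⟨u, _, hu⟩ => ⟨fun i => u i, hu⟩, fun h => ?_⟩
  have hN : 0 < (q : ℤ) ^ ℓ - 1 := by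
    have := one_lt_pow₀ (show (1 : ℤ) < q by omega) (show ℓ ≠ 0 by omega)
    omega
  obtain ⟨u, hlt, hu⟩ := exists_nat_lt_of_mem_solvableIdeal hN h
  refine ⟨u, fun i => ?_, hu⟩
  have hlt_i := hlt i
  have hpow : 1 ≤ q ^ ℓ := Nat.one_le_pow _ _ (by omega)
  zify [hpow]
  omega

end LevelSolvable

theorem stmt3_general (p f m n : ℕ) (hp : p.Prime) (hf : 1 ≤ f)
    (q : ℕ) (hq : q = p ^ f)
    (d : Fin n → Fin m → ℤ) (b : Fin m → ℤ)
    (h : (Lambda q d b).Nonempty) :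
    ∃ ℓ₀ : ℕ, 1 ≤ ℓ₀ ∧ (∀ r : ℕ, r.Prime → r ∣ ℓ₀ → r ∣ q - 1) ∧
      Lambda q d b = {x | ∃ k : ℕ, 1 ≤ k ∧ x = k * ℓ₀} := by
  have hq2 : 2 ≤ q := hq ▸ hp.two_le.trans (Nat.le_self_pow (by omega) p)
  rw [Lambda_eq hq2] at h ⊢
  obtain ⟨hpos, hsolv⟩ := Nat.sInf_mem h
  refine ⟨_, hpos, fun r hr ⟨ℓ, hℓ⟩ => ?_, Nat.eq_setOf_mul_sInf h (fun _ hx => hx.1)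
    (fun _ hx _ hy => ⟨Nat.gcd_pos_of_pos_left _ hx.1, hx.2.gcd hq2 hy.2⟩)
    (fun _ hx k hk => ⟨Nat.mul_pos hk hx.1, hx.2.mul_left k⟩)⟩
  by_contra hrq
  have hℓ_mem : ℓ ∈ {ℓ | 1 ≤ ℓ ∧ LevelSolvable d b q ℓ} :=
    ⟨Nat.pos_of_mul_pos_left (hℓ ▸ hpos), (hℓ ▸ hsolv).of_prime_mul (by omega) hr hrq⟩
  have hle := Nat.sInf_le hℓ_mem
  rw [hℓ] at hle
  nlinarith [hr.two_le]

/-- If `Λ(D, b)` is nonempty then it equals `{kℓ₀ : k ≥ 1}` for some `ℓ₀ ≥ 1` all of whose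
prime factors divide `q - 1`. -/
theorem stmt3 (p f m n : ℕ) (hp : p.Prime) (hf : 1 ≤ f) (hm : 1 ≤ m) (hn : 1 ≤ n)
    (q : ℕ) (hq : q = p ^ f)
    (d : Fin n → Fin m → ℤ) (b : Fin m → ℤ) (hb : ∀ j, 0 ≤ b j ∧ b j ≤ (q : ℤ) - 2)
    (h : (Lambda q d b).Nonempty) :
    ∃ ℓ₀ : ℕ, 1 ≤ ℓ₀ ∧ (∀ r : ℕ, r.Prime → r ∣ ℓ₀ → r ∣ q - 1) ∧
      Lambda q d b = {x | ∃ k : ℕ, 1 ≤ k ∧ x = k * ℓ₀} :=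
  stmt3_general p f m n hp hf q hq d b h
end

section
/- Let ℓ ≥ 1 and u ∈ L(D, q^ℓ, b_ℓ), and write each u_i = Σ_{k=0}^{ℓ−1} u_{i,k} q^k in base q with digits u_{i,k} ∈ {0, …, q−1}. Then for every integer k with 0 ≤ k ≤ ℓ−1, q·Φ_u(ℓ−(k+1)) − Φ_u(ℓ−k) = Σ_{i=1}^n u_{i,k} d_i + b, where the arguments of Φ_u are taken modulo ℓ. In particular (k = ℓ−1), q·Φ_u(0) − Φ_u(1) = Σ_{i=1}^n u_{i,ℓ−1} d_i + b. -/
open Finset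

/-- `delta q ℓ` fixes `q^ℓ-1` and otherwise sends `x` to `q·x mod (q^ℓ-1)`. -/
def delta (q ℓ : ℕ) (x : ℕ) : ℕ :=
  if x = q ^ ℓ - 1 then q ^ ℓ - 1 else (q * x) % (q ^ ℓ - 1)

/-- `phi q ℓ d b u = (∑ uᵢ dᵢ + b_ℓ)/(q^ℓ-1) ∈ ℤ^m`, so that
`Φ_u(t) = phi q ℓ d b (δ_ℓ^t ∘ u)`. -/
def phi (q ℓ : ℕ) {m n : ℕ} (d : Fin n → Fin m → ℤ) (b : Fin m → ℤ) (u : Fin n → ℕ) :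
    Fin m → ℤ :=
  fun j => (∑ i, (u i : ℤ) * d i j + ((q : ℤ) ^ ℓ - 1) / ((q : ℤ) - 1) * b j)
    / ((q : ℤ) ^ ℓ - 1)

/-!
Writing `x = ∑_{k<ℓ} c_k q^k` in base `q`, multiplication by `q` pushes the top digit `c_{ℓ-1}`
out to `c_{ℓ-1} q^ℓ ≡ c_{ℓ-1} (mod q^ℓ - 1)`, so `δ_ℓ` rotates the `ℓ` digits cyclically and
`q x = δ_ℓ x + c_{ℓ-1} (q^ℓ - 1)`. Summing against the `d_i` and using
`q b_ℓ = b_ℓ + (q^ℓ - 1) b` gives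
`q (∑ uᵢ dᵢ + b_ℓ) = (∑ δ_ℓ(u)ᵢ dᵢ + b_ℓ) + (∑ u_{i,ℓ-1} dᵢ + b)(q^ℓ - 1)`;
dividing by `q^ℓ - 1` and applying this to `δ_ℓ^{ℓ-k-1} u`, whose top digits are the `u_{i,k}`,
gives the identity.
-/

section Digits

variable {q ℓ : ℕ}

lemma sum_digits_le (hq : 1 ≤ q) {c : ℕ → ℕ} (hc : ∀ k < ℓ, c k ≤ q - 1) :
    ∑ k ∈ range ℓ, c k * q ^ k ≤ q ^ ℓ - 1 :=
  calc ∑ k ∈ range ℓ, c k * q ^ k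
      ≤ ∑ k ∈ range ℓ, (q - 1) * q ^ k :=
        sum_le_sum fun k hk => Nat.mul_le_mul_right _ (hc k (mem_range.mp hk))
    _ = q ^ ℓ - 1 := by rw [← mul_sum, mul_comm, geom_sum_mul_of_one_le hq]

lemma delta_eq_of_mul_eq (hq : 2 ≤ q) (hℓ : 1 ≤ ℓ) {x y c : ℕ} (hx : x ≤ q ^ ℓ - 1)
    (hy : y ≤ q ^ ℓ - 1) (hc : c < q) (h : q * x = y + c * (q ^ ℓ - 1)) :
    delta q ℓ x = y := by
  have hN : 1 ≤ q ^ ℓ - 1 := by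
    have := Nat.le_self_pow (show ℓ ≠ 0 by omega) q
    omega
  unfold delta
  split_ifs with hxN
  · -- `y = (q - c)(q^ℓ - 1) ≥ q^ℓ - 1`
    subst hxN
    have := Nat.mul_le_mul_right (q ^ ℓ - 1) (show c + 1 ≤ q by omega)
    rw [add_mul, one_mul] at this
    omega
  · rw [h, Nat.add_mul_mod_self_right]
    refine Nat.mod_eq_of_lt (lt_of_le_of_ne hy fun hyN => ?_)
    have hcop : Nat.Coprime (q ^ ℓ - 1) q :=
      (Nat.Coprime.coprime_dvd_left (dvd_pow_self q (by omega))
        ((Nat.coprime_self_sub_right (by omega)).mpr (Nat.coprime_one_right _))).symm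
    have hdvd : q ^ ℓ - 1 ∣ x := by
      refine hcop.dvd_of_dvd_mul_left ⟨c + 1, ?_⟩
      rw [h, hyN]
      ring
    obtain rfl : x = 0 := Nat.eq_zero_of_dvd_of_lt hdvd (by omega)
    omega

def rotateDigits (ℓ : ℕ) (c : ℕ → ℕ) : ℕ → ℕ := fun k => c ((k + ℓ - 1) % ℓ)

lemma rotateDigits_apply {c : ℕ → ℕ} {k : ℕ} (hk : 0 < k) (hkℓ : k ≤ ℓ) :
    rotateDigits ℓ c k = c (k - 1) := by
  rw [rotateDigits, show k + ℓ - 1 = k - 1 + ℓ by omega, Nat.add_mod_right,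
    Nat.mod_eq_of_lt (by omega)]

lemma rotateDigits_iterate_apply {c : ℕ → ℕ} {t k : ℕ} (ht : t ≤ k) (hkℓ : k ≤ ℓ) :
    (rotateDigits ℓ)^[t] c k = c (k - t) := by
  induction t generalizing k with
  | zero => rfl
  | succ t ih =>
    rw [Function.iterate_succ_apply', rotateDigits_apply (by omega) hkℓ, ih (by omega) (by omega),
      Nat.sub_sub, Nat.add_comm]

lemma rotateDigits_le {c : ℕ → ℕ} (hc : ∀ k < ℓ, c k ≤ q - 1) :
    ∀ k < ℓ, rotateDigits ℓ c k ≤ q - 1 :=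
  fun _ hk => hc _ (Nat.mod_lt _ (Nat.zero_lt_of_lt hk))

lemma mul_sum_digits (hℓ : 1 ≤ ℓ) (c : ℕ → ℕ) :
    q * ∑ k ∈ range ℓ, c k * q ^ k + c (ℓ - 1)
      = ∑ k ∈ range ℓ, rotateDigits ℓ c k * q ^ k + c (ℓ - 1) * q ^ ℓ := by
  obtain ⟨ℓ, rfl⟩ : ∃ ℓ', ℓ = ℓ' + 1 := ⟨ℓ - 1, by omega⟩
  have hshift : ∑ k ∈ range ℓ, rotateDigits (ℓ + 1) c (k + 1) * q ^ (k + 1)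
      = q * ∑ k ∈ range ℓ, c k * q ^ k := by
    rw [mul_sum]
    refine sum_congr rfl fun k hk => ?_
    rw [rotateDigits_apply (by omega) (by simp at hk; omega), Nat.add_sub_cancel]
    ring
  have hzero : rotateDigits (ℓ + 1) c 0 = c ℓ := by simp [rotateDigits]
  rw [sum_range_succ, sum_range_succ', hshift, hzero, Nat.add_sub_cancel]
  ring

lemma mul_sum_digits_eq (hq : 1 ≤ q) (hℓ : 1 ≤ ℓ) (c : ℕ → ℕ) :
    q * ∑ k ∈ range ℓ, c k * q ^ k
      = ∑ k ∈ range ℓ, rotateDigits ℓ c k * q ^ k + c (ℓ - 1) * (q ^ ℓ - 1) := by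
  have h := mul_sum_digits (q := q) hℓ c
  have : c (ℓ - 1) ≤ c (ℓ - 1) * q ^ ℓ := Nat.le_mul_of_pos_right _ (by positivity)
  rw [Nat.mul_sub_one]
  omega

lemma delta_sum_digits (hq : 2 ≤ q) (hℓ : 1 ≤ ℓ) {c : ℕ → ℕ} (hc : ∀ k < ℓ, c k ≤ q - 1) :
    delta q ℓ (∑ k ∈ range ℓ, c k * q ^ k) = ∑ k ∈ range ℓ, rotateDigits ℓ c k * q ^ k := by
  refine delta_eq_of_mul_eq hq hℓ (sum_digits_le (by omega) hc)
    (sum_digits_le (by omega) (rotateDigits_le hc))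
    (by have := hc (ℓ - 1) (by omega); omega) (mul_sum_digits_eq (by omega) hℓ c)

lemma iterate_delta_sum_digits (hq : 2 ≤ q) (hℓ : 1 ≤ ℓ) {c : ℕ → ℕ}
    (hc : ∀ k < ℓ, c k ≤ q - 1) (t : ℕ) :
    (delta q ℓ)^[t] (∑ k ∈ range ℓ, c k * q ^ k)
      = ∑ k ∈ range ℓ, (rotateDigits ℓ)^[t] c k * q ^ k := by
  induction t generalizing c with
  | zero => rfl
  | succ t ih =>
    rw [Function.iterate_succ_apply, Function.iterate_succ_apply, delta_sum_digits hq hℓ hc,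
      ih (rotateDigits_le hc)]

lemma mul_iterate_delta_sum_digits (hq : 2 ≤ q) (hℓ : 1 ≤ ℓ) {c : ℕ → ℕ}
    (hc : ∀ k < ℓ, c k ≤ q - 1) (t : ℕ) :
    q * (delta q ℓ)^[t] (∑ k ∈ range ℓ, c k * q ^ k)
      = (delta q ℓ)^[t + 1] (∑ k ∈ range ℓ, c k * q ^ k)
        + (rotateDigits ℓ)^[t] c (ℓ - 1) * (q ^ ℓ - 1) := by
  rw [iterate_delta_sum_digits hq hℓ hc, iterate_delta_sum_digits hq hℓ hc,
    Function.iterate_succ_apply']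
  exact mul_sum_digits_eq (by omega) hℓ _

end Digits

def phiNum (q ℓ : ℕ) {m n : ℕ} (d : Fin n → Fin m → ℤ) (b : Fin m → ℤ) (u : Fin n → ℕ)
    (j : Fin m) : ℤ :=
  ∑ i, (u i : ℤ) * d i j + ((q : ℤ) ^ ℓ - 1) / ((q : ℤ) - 1) * b j

section Phi

variable {q ℓ m n : ℕ} {d : Fin n → Fin m → ℤ} {b : Fin m → ℤ}

lemma mul_phiNum_eq {v w e : Fin n → ℕ}
    (h : ∀ i, (q : ℤ) * v i = w i + e i * ((q : ℤ) ^ ℓ - 1)) (j : Fin m) :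
    (q : ℤ) * phiNum q ℓ d b v j
      = phiNum q ℓ d b w j + (∑ i, (e i : ℤ) * d i j + b j) * ((q : ℤ) ^ ℓ - 1) := by
  have hgeo : ((q : ℤ) ^ ℓ - 1) / ((q : ℤ) - 1) * ((q : ℤ) - 1) = (q : ℤ) ^ ℓ - 1 :=
    Int.ediv_mul_cancel (sub_one_dvd_pow_sub_one _ _)
  have hsum : (q : ℤ) * ∑ i, (v i : ℤ) * d i j
      = ∑ i, (w i : ℤ) * d i j + (∑ i, (e i : ℤ) * d i j) * ((q : ℤ) ^ ℓ - 1) := by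
    rw [mul_sum, sum_mul, ← sum_add_distrib]
    exact sum_congr rfl fun i _ => by linear_combination d i j * h i
  unfold phiNum
  linear_combination hsum + b j * hgeo

lemma dvd_phiNum_of_mul_eq {v w e : Fin n → ℕ}
    (h : ∀ i, (q : ℤ) * v i = w i + e i * ((q : ℤ) ^ ℓ - 1)) {j : Fin m}
    (hv : (q : ℤ) ^ ℓ - 1 ∣ phiNum q ℓ d b v j) : (q : ℤ) ^ ℓ - 1 ∣ phiNum q ℓ d b w j := by
  have := (dvd_mul_of_dvd_right hv (q : ℤ)).sub (dvd_mul_left ((q : ℤ) ^ ℓ - 1)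
    (∑ i, (e i : ℤ) * d i j + b j))
  rwa [mul_phiNum_eq h, add_sub_cancel_right] at this

lemma mul_phi_sub_phi {v w e : Fin n → ℕ} (hN : (q : ℤ) ^ ℓ - 1 ≠ 0)
    (h : ∀ i, (q : ℤ) * v i = w i + e i * ((q : ℤ) ^ ℓ - 1)) {j : Fin m}
    (hv : (q : ℤ) ^ ℓ - 1 ∣ phiNum q ℓ d b v j) :
    (q : ℤ) * phi q ℓ d b v j - phi q ℓ d b w j = ∑ i, (e i : ℤ) * d i j + b j := by
  obtain ⟨s, hs⟩ := hv
  obtain ⟨s', hs'⟩ := dvd_phiNum_of_mul_eq h ⟨s, hs⟩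
  have key := mul_phiNum_eq (d := d) (b := b) h j
  rw [hs, hs'] at key
  change (q : ℤ) * (phiNum q ℓ d b v j / _) - phiNum q ℓ d b w j / _ = _
  rw [hs, hs', Int.mul_ediv_cancel_left _ hN, Int.mul_ediv_cancel_left _ hN]
  exact mul_left_cancel₀ hN (by linear_combination key)

end Phi

theorem stmt10_general (m n : ℕ)
    (q : ℕ)
    (d : Fin n → Fin m → ℤ) (b : Fin m → ℤ) (hb : ∀ j, 0 ≤ b j ∧ b j ≤ (q : ℤ) - 2)
    (ℓ : ℕ) (hℓ : 1 ≤ ℓ) (u : Fin n → ℕ) (hu : u ∈ Lset q ℓ d b)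
    (a : Fin n → ℕ → ℕ) (ha : ∀ i k, a i k ≤ q - 1)
    (hrep : ∀ i, u i = ∑ k ∈ Finset.range ℓ, a i k * q ^ k) :
    ∀ k, k ≤ ℓ - 1 → ∀ j,
      (q : ℤ) * phi q ℓ d b (fun i => (delta q ℓ)^[ℓ - (k + 1)] (u i)) j
        - phi q ℓ d b (fun i => (delta q ℓ)^[ℓ - k] (u i)) j
      = ∑ i, (a i k : ℤ) * d i j + b j := by
  intro k hk j
  have hq : 2 ≤ q := by have := hb j; omega
  have hN : (q : ℤ) ^ ℓ - 1 ≠ 0 := by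
    have : (2 : ℤ) ≤ (q : ℤ) ^ ℓ := by exact_mod_cast hq.trans (Nat.le_self_pow (by omega) q)
    omega
  have hstep : ∀ t i, (q : ℤ) * ((delta q ℓ)^[t] (u i) : ℕ) = ((delta q ℓ)^[t + 1] (u i) : ℕ)
      + ((rotateDigits ℓ)^[t] (a i) (ℓ - 1) : ℕ) * ((q : ℤ) ^ ℓ - 1) := fun t i => by
    have : 1 ≤ q ^ ℓ := Nat.one_le_pow _ _ (by omega)
    rw [hrep i]
    exact_mod_cast mul_iterate_delta_sum_digits hq hℓ (fun k _ => ha i k) t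
  have hdvd : ∀ t, (q : ℤ) ^ ℓ - 1 ∣ phiNum q ℓ d b (fun i => (delta q ℓ)^[t] (u i)) j := by
    intro t
    induction t with
    | zero => exact hu.2 j
    | succ t ih => exact dvd_phiNum_of_mul_eq (hstep t) ih
  have htop : ∀ i, (rotateDigits ℓ)^[ℓ - (k + 1)] (a i) (ℓ - 1) = a i k := fun i => by
    rw [rotateDigits_iterate_apply (by omega) (by omega)]
    congr 1
    omega
  rw [show ℓ - k = ℓ - (k + 1) + 1 by omega]
  simpa only [htop] using mul_phi_sub_phi hN (hstep (ℓ - (k + 1))) (hdvd _)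

/-- If `u ∈ L(D, q^ℓ, b_ℓ)` with base-`q` digits `uᵢ = ∑_k u_{i,k} q^k`,
then for `0 ≤ k ≤ ℓ-1`, `q·Φ_u(ℓ-(k+1)) − Φ_u(ℓ-k) = ∑ᵢ u_{i,k} dᵢ + b`. -/
theorem stmt10 (p f m n : ℕ) (hp : p.Prime) (hf : 1 ≤ f) (hm : 1 ≤ m) (hn : 1 ≤ n)
    (q : ℕ) (hq : q = p ^ f)
    (d : Fin n → Fin m → ℤ) (b : Fin m → ℤ) (hb : ∀ j, 0 ≤ b j ∧ b j ≤ (q : ℤ) - 2)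
    (ℓ : ℕ) (hℓ : 1 ≤ ℓ) (u : Fin n → ℕ) (hu : u ∈ Lset q ℓ d b)
    (a : Fin n → ℕ → ℕ) (ha : ∀ i k, a i k ≤ q - 1)
    (hrep : ∀ i, u i = ∑ k ∈ Finset.range ℓ, a i k * q ^ k) :
    ∀ k, k ≤ ℓ - 1 → ∀ j,
      (q : ℤ) * phi q ℓ d b (fun i => (delta q ℓ)^[ℓ - (k + 1)] (u i)) j
        - phi q ℓ d b (fun i => (delta q ℓ)^[ℓ - k] (u i)) j
      = ∑ i, (a i k : ℤ) * d i j + b j :=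
  stmt10_general m n q d b hb ℓ hℓ u hu a ha hrep
end

section
/- Let ℓ ≥ 1, u ∈ L(D, q^ℓ, b_ℓ), and 1 ≤ t ≤ ℓ−1. Write u_i = q^t·w_i + v_i with 0 ≤ v_i < q^t for each 1 ≤ i ≤ n. Then Σ_{i=1}^n v_i d_i + b_t = q^t·Φ_u(−t) − Φ_u(0) and Σ_{i=1}^n w_i d_i + b_{ℓ−t} = q^{ℓ−t}·Φ_u(0) − Φ_u(−t), where the arguments of Φ_u are taken modulo ℓ. -/
/-!
With `N = q^ℓ - 1`, the map `δ^{ℓ-t}` rotates base-`q` digits: it sends `q^t w + v` to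
`q^{ℓ-t} v + w`. Writing `S(x) = ∑ xᵢ dᵢ + b_ℓ`, this gives
`q^t S(δ^{ℓ-t} u) - S(u) = N (∑ vᵢ dᵢ + b_t)` and `q^{ℓ-t} S(u) - S(δ^{ℓ-t} u) = N (∑ wᵢ dᵢ + b_{ℓ-t})`.
Since `N ∣ S(u)`, the second identity gives `N ∣ S(δ^{ℓ-t} u)`, and dividing both by `N` yields the claim.
-/

open Finset

lemma delta_iterate_apply {q ℓ x : ℕ} (hx : x ≤ q ^ ℓ - 1) (s : ℕ) :
    (delta q ℓ)^[s] x = if x = q ^ ℓ - 1 then q ^ ℓ - 1 else q ^ s * x % (q ^ ℓ - 1) := by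
  induction s with
  | zero =>
    rw [Function.iterate_zero_apply, pow_zero, one_mul]
    split_ifs with h
    · exact h
    · exact (Nat.mod_eq_of_lt (lt_of_le_of_ne hx h)).symm
  | succ s ih =>
    rw [Function.iterate_succ_apply', ih]
    split_ifs with h
    · simp [delta]
    · have hlt : q ^ s * x % (q ^ ℓ - 1) < q ^ ℓ - 1 := Nat.mod_lt _ (by omega)
      rw [delta, if_neg hlt.ne, Nat.mul_mod_mod, pow_succ', mul_assoc]

lemma le_of_mul_eq_mul_add {a N v x : ℕ} (h : a * N = N * v + x) (hv : v < a) : N ≤ x := by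
  nlinarith [Nat.mul_le_mul_left N hv]

lemma rotate_digits {A C N v w : ℕ} (hAC : A * C = N + 1) (hv : v < A)
    (hx : A * w + v ≤ N) :
    (if A * w + v = N then N else C * (A * w + v) % N) = C * v + w := by
  have hw : w < C := Nat.lt_of_mul_lt_mul_left (a := A) (by omega)
  have hy : C * v + w ≤ N := by nlinarith [Nat.mul_le_mul_left C hv]
  have hAy : A * (C * v + w) = N * v + (A * w + v) := by
    calc A * (C * v + w) = A * C * v + A * w := by ring
      _ = N * v + (A * w + v) := by rw [hAC]; ring
  have hCx : C * (A * w + v) = N * w + (C * v + w) := by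
    calc C * (A * w + v) = A * C * w + C * v := by ring
      _ = N * w + (C * v + w) := by rw [hAC]; ring
  -- `hAy` and `hCx` with `v < A`, `w < C` force `A * w + v = N` exactly when `C * v + w = N`.
  split_ifs with hxN
  · rw [hxN] at hCx
    exact le_antisymm (le_of_mul_eq_mul_add hCx hw) hy
  · have hyN : C * v + w ≠ N := fun hyN =>
      hxN (le_antisymm hx (le_of_mul_eq_mul_add (hyN ▸ hAy) hv))
    rw [hCx, Nat.mul_add_mod, Nat.mod_eq_of_lt (lt_of_le_of_ne hy hyN)]

lemma delta_iterate_sub {q ℓ t v w : ℕ} (hq : 0 < q) (ht : t ≤ ℓ) (hv : v < q ^ t)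
    (hx : q ^ t * w + v ≤ q ^ ℓ - 1) :
    (delta q ℓ)^[ℓ - t] (q ^ t * w + v) = q ^ (ℓ - t) * v + w := by
  have hAC : q ^ t * q ^ (ℓ - t) = q ^ ℓ - 1 + 1 := by
    rw [← pow_add, Nat.add_sub_cancel' ht, Nat.sub_add_cancel (Nat.one_le_pow _ _ hq)]
  rw [delta_iterate_apply hx]
  exact rotate_digits hAC hv hx

lemma geom_quot_mul_comm (x : ℤ) (s k : ℕ) :
    (x ^ s - 1) * ((x ^ k - 1) / (x - 1)) = (x ^ k - 1) * ((x ^ s - 1) / (x - 1)) := by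
  have hdvd : ∀ n : ℕ, x - 1 ∣ x ^ n - 1 := fun n => by
    simpa using sub_dvd_pow_sub_pow x 1 n
  rw [← Int.mul_ediv_assoc _ (hdvd k), ← Int.mul_ediv_assoc _ (hdvd s), mul_comm]

lemma rotate_sum_identity {ι : Type*} (s : Finset ι) {x : ℤ} {t ℓ : ℕ} (ht : t ≤ ℓ)
    (v w d : ι → ℤ) (c : ℤ) :
    x ^ t * (∑ i ∈ s, (x ^ (ℓ - t) * v i + w i) * d i + (x ^ ℓ - 1) / (x - 1) * c)
      - (∑ i ∈ s, (x ^ t * w i + v i) * d i + (x ^ ℓ - 1) / (x - 1) * c)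
      = (x ^ ℓ - 1) * (∑ i ∈ s, v i * d i + (x ^ t - 1) / (x - 1) * c) := by
  have hpow : x ^ t * x ^ (ℓ - t) = x ^ ℓ := by rw [← pow_add, Nat.add_sub_cancel' ht]
  have hsum : x ^ t * ∑ i ∈ s, (x ^ (ℓ - t) * v i + w i) * d i
      - ∑ i ∈ s, (x ^ t * w i + v i) * d i = (x ^ ℓ - 1) * ∑ i ∈ s, v i * d i := by
    rw [Finset.mul_sum, Finset.mul_sum, ← sum_sub_distrib]
    exact sum_congr rfl fun i _ => by linear_combination v i * d i * hpow
  linear_combination hsum + c * geom_quot_mul_comm x t ℓ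

lemma eq_sub_ediv_of_dvd {N X Y A C P Q : ℤ} (hN : N ≠ 0) (hX : N ∣ X)
    (hP : A * Y - X = N * P) (hQ : C * X - Y = N * Q) :
    P = A * (Y / N) - X / N ∧ Q = C * (X / N) - Y / N := by
  obtain ⟨x, rfl⟩ := hX
  obtain rfl : Y = N * (C * x - Q) := by linear_combination -hQ
  rw [Int.mul_ediv_cancel_left _ hN, Int.mul_ediv_cancel_left _ hN]
  constructor <;> apply mul_left_cancel₀ hN
  · linear_combination -hP
  · ring

theorem stmt11_general (p f m n : ℕ) (hp : p.Prime) (hf : 1 ≤ f)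
    (q : ℕ) (hq : q = p ^ f)
    (d : Fin n → Fin m → ℤ) (b : Fin m → ℤ)
    (ℓ : ℕ) (hℓ : 1 ≤ ℓ) (u : Fin n → ℕ) (hu : u ∈ Lset q ℓ d b)
    (t : ℕ) (ht2 : t ≤ ℓ - 1)
    (v w : Fin n → ℕ) (hvw : ∀ i, u i = q ^ t * w i + v i ∧ v i < q ^ t) :
    (∀ j, ∑ i, (v i : ℤ) * d i j + ((q : ℤ) ^ t - 1) / ((q : ℤ) - 1) * b j
        = (q : ℤ) ^ t * phi q ℓ d b (fun i => (delta q ℓ)^[ℓ - t] (u i)) j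
          - phi q ℓ d b u j) ∧
    (∀ j, ∑ i, (w i : ℤ) * d i j + ((q : ℤ) ^ (ℓ - t) - 1) / ((q : ℤ) - 1) * b j
        = (q : ℤ) ^ (ℓ - t) * phi q ℓ d b u j
          - phi q ℓ d b (fun i => (delta q ℓ)^[ℓ - t] (u i)) j) := by
  obtain ⟨hu_le, hu_dvd⟩ := hu
  have hq2 : 2 ≤ q := hq ▸ (Nat.one_lt_pow (by omega) hp.one_lt)
  have ht : t ≤ ℓ := by omega
  have hN : (q : ℤ) ^ ℓ - 1 ≠ 0 := by
    have : 2 ≤ (q : ℤ) ^ ℓ := by exact_mod_cast hq2.trans (Nat.le_self_pow (by omega) q)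
    omega
  obtain rfl : u = fun i => q ^ t * w i + v i := funext fun i => (hvw i).1
  have hrot i : (delta q ℓ)^[ℓ - t] (q ^ t * w i + v i) = q ^ (ℓ - t) * v i + w i :=
    delta_iterate_sub (by omega) ht (hvw i).2 (hu_le i)
  simp only [phi, hrot]
  push_cast at hu_dvd ⊢
  have key j := eq_sub_ediv_of_dvd hN (hu_dvd j)
    (rotate_sum_identity univ ht (fun i => (v i : ℤ)) (fun i => (w i : ℤ)) (d · j) (b j))
    (Nat.sub_sub_self ht ▸ rotate_sum_identity univ (Nat.sub_le ℓ t)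
      (fun i => (w i : ℤ)) (fun i => (v i : ℤ)) (d · j) (b j))
  exact ⟨fun j => (key j).1, fun j => (key j).2⟩

/-- For `u ∈ L(D, q^ℓ, b_ℓ)`, `1 ≤ t ≤ ℓ-1` and `uᵢ = q^t wᵢ + vᵢ` with `0 ≤ vᵢ < q^t`,
one has `∑ vᵢ dᵢ + b_t = q^t·Φ_u(-t) − Φ_u(0)` and
`∑ wᵢ dᵢ + b_{ℓ-t} = q^{ℓ-t}·Φ_u(0) − Φ_u(-t)`. -/
theorem stmt11 (p f m n : ℕ) (hp : p.Prime) (hf : 1 ≤ f) (hm : 1 ≤ m) (hn : 1 ≤ n)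
    (q : ℕ) (hq : q = p ^ f)
    (d : Fin n → Fin m → ℤ) (b : Fin m → ℤ) (hb : ∀ j, 0 ≤ b j ∧ b j ≤ (q : ℤ) - 2)
    (ℓ : ℕ) (hℓ : 1 ≤ ℓ) (u : Fin n → ℕ) (hu : u ∈ Lset q ℓ d b)
    (t : ℕ) (ht1 : 1 ≤ t) (ht2 : t ≤ ℓ - 1)
    (v w : Fin n → ℕ) (hvw : ∀ i, u i = q ^ t * w i + v i ∧ v i < q ^ t) :
    (∀ j, ∑ i, (v i : ℤ) * d i j + ((q : ℤ) ^ t - 1) / ((q : ℤ) - 1) * b j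
        = (q : ℤ) ^ t * phi q ℓ d b (fun i => (delta q ℓ)^[ℓ - t] (u i)) j
          - phi q ℓ d b u j) ∧
    (∀ j, ∑ i, (w i : ℤ) * d i j + ((q : ℤ) ^ (ℓ - t) - 1) / ((q : ℤ) - 1) * b j
        = (q : ℤ) ^ (ℓ - t) * phi q ℓ d b u j
          - phi q ℓ d b (fun i => (delta q ℓ)^[ℓ - t] (u i)) j) :=
  stmt11_general p f m n hp hf q hq d b ℓ hℓ u hu t ht2 v w hvw
end

section
/- Let ℓ ≥ 2, u ∈ L(D, q^ℓ, b_ℓ), and let 1 ≤ t ≤ ℓ−1 be such that Φ_u(0) = Φ_u(t). Write u_i = q^{ℓ−t}·w_i + v_i with 0 ≤ v_i < q^{ℓ−t} for each i. Then v = (v_1, …, v_n) ∈ L(D, q^{ℓ−t}, b_{ℓ−t}), w = (w_1, …, w_n) ∈ L(D, q^t, b_t), and σ_p(u) = σ_p(v) + σ_p(w). -/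
/-
Write `ℓ = s + t`. In base `q` (a power of `p`) each `uᵢ = q^s wᵢ + vᵢ` is the digit string
`wᵢ ‖ vᵢ`, and `δ_ℓ^t` rotates it to `vᵢ ‖ wᵢ`, so `σ_p` is additive over the two blocks. Putting
`X = ∑ vᵢ dᵢ + b_s` and `Y = ∑ wᵢ dᵢ + b_t`, the numerators of `Φ_u(0)` and `Φ_u(t)` are
`q^s Y + X` and `q^t X + Y`. If the first is `(q^ℓ - 1) k`, the second is
`(q^ℓ - 1)(q^t k - Y)`, so `Φ_u(0) = Φ_u(t)` forces `Y = (q^t - 1) k` and then `X = (q^s - 1) k`.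
-/

open Finset

/-- `σ_p` of a tuple: the sum over the coordinates of the base-`p` digit sums. -/
def sigmaTuple (p : ℕ) {n : ℕ} (u : Fin n → ℕ) : ℕ :=
  ∑ i, (Nat.digits p (u i)).sum

lemma Nat.digits_sum_pow_mul_add {p K v w : ℕ} (hp : 1 < p) (hv : v < p ^ K) :
    (Nat.digits p (p ^ K * w + v)).sum = (Nat.digits p v).sum + (Nat.digits p w).sum := by
  rcases Nat.eq_zero_or_pos w with rfl | hw
  · simp
  have hlen : (Nat.digits p v).length ≤ K := (Nat.digits_length_le_iff hp v).2 hv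
  have h := Nat.digits_append_zeroes_append_digits (k := K - (Nat.digits p v).length) (n := v) hp hw
  rw [Nat.add_sub_cancel' hlen] at h
  rw [add_comm, ← h]
  simp

lemma sigmaTuple_eq_add {p K n : ℕ} (hp : 1 < p) {u v w : Fin n → ℕ}
    (h : ∀ i, u i = p ^ K * w i + v i ∧ v i < p ^ K) :
    sigmaTuple p u = sigmaTuple p v + sigmaTuple p w := by
  simp only [sigmaTuple, ← Finset.sum_add_distrib]
  refine Finset.sum_congr rfl fun i _ => ?_
  rw [(h i).1, Nat.digits_sum_pow_mul_add hp (h i).2]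

lemma mul_add_eq_mul_sub_one_iff {a b v w : ℕ} (hv : v < a) (hw : w < b) :
    a * w + v = a * b - 1 ↔ v = a - 1 ∧ w = b - 1 := by
  obtain ⟨a, rfl⟩ : ∃ a', a = a' + 1 := ⟨a - 1, by omega⟩
  obtain ⟨b, rfl⟩ : ∃ b', b = b' + 1 := ⟨b - 1, by omega⟩
  rw [Nat.mul_succ, ← add_assoc, Nat.add_sub_cancel, Nat.add_sub_cancel, Nat.add_sub_cancel]
  constructor
  · intro h
    obtain rfl : w = b := by
      rcases lt_trichotomy w b with hlt | heq | hgt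
      · nlinarith
      · exact heq
      · nlinarith
    exact ⟨by omega, rfl⟩
  · rintro ⟨rfl, rfl⟩
    omega

lemma delta_iterate_of_lt {q ℓ x : ℕ} (hx : x < q ^ ℓ - 1) (t : ℕ) :
    (delta q ℓ)^[t] x = q ^ t * x % (q ^ ℓ - 1) := by
  induction t with
  | zero => simp [Nat.mod_eq_of_lt hx]
  | succ t ih =>
    have hne : q ^ t * x % (q ^ ℓ - 1) ≠ q ^ ℓ - 1 := (Nat.mod_lt _ (by omega)).ne
    rw [Function.iterate_succ_apply', ih, delta, if_neg hne, Nat.mul_mod_mod, pow_succ',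
      mul_assoc]

lemma delta_iterate_pow_sub_one (q ℓ t : ℕ) : (delta q ℓ)^[t] (q ^ ℓ - 1) = q ^ ℓ - 1 :=
  Function.iterate_fixed (by simp [delta]) t

lemma delta_iterate_pow_mul_add {q s t v w : ℕ} (hv : v < q ^ s) (hw : w < q ^ t) :
    (delta q (s + t))^[t] (q ^ s * w + v) = q ^ t * v + w := by
  have hqst : q ^ (s + t) = q ^ s * q ^ t := pow_add q s t
  have hmax : q ^ s * w + v = q ^ (s + t) - 1 ↔ q ^ t * v + w = q ^ (s + t) - 1 := by
    rw [hqst, mul_add_eq_mul_sub_one_iff hv hw, mul_comm (q ^ s),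
      mul_add_eq_mul_sub_one_iff hw hv, and_comm]
  have hle : q ^ s * w + v ≤ q ^ (s + t) - 1 := by
    have := Nat.mul_add_lt_mul_of_lt_of_lt hw hv
    rw [hqst, mul_comm (q ^ s) (q ^ t)]; omega
  rcases hle.eq_or_lt with h | h
  · rw [h, delta_iterate_pow_sub_one, hmax.1 h]
  have hlt : q ^ t * v + w < q ^ (s + t) - 1 := by
    have := Nat.mul_add_lt_mul_of_lt_of_lt hv hw
    refine lt_of_le_of_ne ?_ (hmax.not.1 h.ne)
    rw [hqst]; omega
  have hrot : q ^ t * (q ^ s * w + v) = w * (q ^ (s + t) - 1) + (q ^ t * v + w) := by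
    have : 0 < q ^ s * q ^ t := Nat.mul_pos (by omega) (by omega)
    rw [hqst]
    zify [this]
    ring
  rw [delta_iterate_of_lt h, hrot, Nat.mul_add_mod_of_lt hlt]

def phiNumer (q ℓ : ℕ) {m n : ℕ} (d : Fin n → Fin m → ℤ) (b : Fin m → ℤ) (x : Fin n → ℕ)
    (j : Fin m) : ℤ :=
  ∑ i, (x i : ℤ) * d i j + ((q : ℤ) ^ ℓ - 1) / ((q : ℤ) - 1) * b j

section Numerator

variable {q ℓ m n : ℕ} {d : Fin n → Fin m → ℤ} {b : Fin m → ℤ} {x : Fin n → ℕ}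

lemma mem_Lset_iff :
    x ∈ Lset q ℓ d b ↔ (∀ i, x i ≤ q ^ ℓ - 1) ∧ ∀ j, (q : ℤ) ^ ℓ - 1 ∣ phiNumer q ℓ d b x j :=
  Iff.rfl

lemma phi_apply (j : Fin m) : phi q ℓ d b x j = phiNumer q ℓ d b x j / ((q : ℤ) ^ ℓ - 1) :=
  rfl

end Numerator

lemma Int.pow_add_sub_one_ediv_sub_one {Q : ℤ} (hQ : Q ≠ 1) (s t : ℕ) :
    (Q ^ (s + t) - 1) / (Q - 1) = (Q ^ s - 1) / (Q - 1) + Q ^ s * ((Q ^ t - 1) / (Q - 1)) := by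
  have hQ' : Q - 1 ≠ 0 := sub_ne_zero.2 hQ
  obtain ⟨a, ha⟩ := sub_one_dvd_pow_sub_one Q s
  obtain ⟨c, hc⟩ := sub_one_dvd_pow_sub_one Q t
  have hst : Q ^ (s + t) - 1 = (Q - 1) * (a + Q ^ s * c) := by
    linear_combination (Q ^ s) * hc + ha
  rw [hst, ha, hc, Int.mul_ediv_cancel_left _ hQ', Int.mul_ediv_cancel_left _ hQ',
    Int.mul_ediv_cancel_left _ hQ']

lemma phiNumer_pow_mul_add {q : ℕ} (hq : (q : ℤ) ≠ 1) (s t : ℕ) {m n : ℕ}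
    (d : Fin n → Fin m → ℤ) (b : Fin m → ℤ) (x y : Fin n → ℕ) (j : Fin m) :
    phiNumer q (s + t) d b (fun i => q ^ s * x i + y i) j =
      q ^ s * phiNumer q t d b x j + phiNumer q s d b y j := by
  simp only [phiNumer, Int.pow_add_sub_one_ediv_sub_one hq, Nat.cast_add, Nat.cast_mul,
    Nat.cast_pow, add_mul, Finset.sum_add_distrib, mul_assoc, ← Finset.mul_sum]
  ring

lemma pow_sub_one_dvd_of_ediv_eq_ediv_swap {Q X Y : ℤ} {s t : ℕ} (hN : Q ^ (s + t) - 1 ≠ 0)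
    (hdvd : Q ^ (s + t) - 1 ∣ Q ^ s * Y + X)
    (heq : (Q ^ s * Y + X) / (Q ^ (s + t) - 1) = (Q ^ t * X + Y) / (Q ^ (s + t) - 1)) :
    Q ^ s - 1 ∣ X ∧ Q ^ t - 1 ∣ Y := by
  obtain ⟨k, hk⟩ := hdvd
  have hrot : Q ^ t * X + Y = (Q ^ (s + t) - 1) * (Q ^ t * k - Y) := by
    linear_combination Q ^ t * hk
  rw [hk, hrot, Int.mul_ediv_cancel_left _ hN, Int.mul_ediv_cancel_left _ hN] at heq
  have hY : Y = (Q ^ t - 1) * k := by linear_combination heq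
  exact ⟨⟨k, by linear_combination hk - Q ^ s * hY⟩, ⟨k, hY⟩⟩

lemma mem_Lset_of_phi_eq_swap {q s t m n : ℕ} (hq : 2 ≤ q) (ht : 1 ≤ t)
    {d : Fin n → Fin m → ℤ} {b : Fin m → ℤ} {v w : Fin n → ℕ}
    (hv : ∀ i, v i < q ^ s) (hw : ∀ i, w i < q ^ t)
    (hu : (fun i => q ^ s * w i + v i) ∈ Lset q (s + t) d b)
    (hΦ : phi q (s + t) d b (fun i => q ^ s * w i + v i) =
      phi q (s + t) d b (fun i => q ^ t * v i + w i)) :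
    v ∈ Lset q s d b ∧ w ∈ Lset q t d b := by
  have hq1 : (q : ℤ) ≠ 1 := by omega
  have hN : (q : ℤ) ^ (s + t) - 1 ≠ 0 :=
    sub_ne_zero.2 (one_lt_pow₀ (by exact_mod_cast hq) (by omega)).ne'
  have hdvd (j : Fin m) : (q : ℤ) ^ s - 1 ∣ phiNumer q s d b v j ∧
      (q : ℤ) ^ t - 1 ∣ phiNumer q t d b w j := by
    have h1 := phiNumer_pow_mul_add hq1 s t d b w v j
    have h2 := phiNumer_pow_mul_add hq1 t s d b v w j
    rw [add_comm t s] at h2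
    refine pow_sub_one_dvd_of_ediv_eq_ediv_swap hN (h1 ▸ (mem_Lset_iff.1 hu).2 j) ?_
    rw [← h1, ← h2, ← phi_apply, ← phi_apply, hΦ]
  exact ⟨mem_Lset_iff.2 ⟨fun i => Nat.le_sub_one_of_lt (hv i), fun j => (hdvd j).1⟩,
    mem_Lset_iff.2 ⟨fun i => Nat.le_sub_one_of_lt (hw i), fun j => (hdvd j).2⟩⟩

theorem stmt12_general (p f m n : ℕ) (hp : p.Prime) (hf : 1 ≤ f)
    (q : ℕ) (hq : q = p ^ f)
    (d : Fin n → Fin m → ℤ) (b : Fin m → ℤ)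
    (ℓ : ℕ) (u : Fin n → ℕ) (hu : u ∈ Lset q ℓ d b)
    (t : ℕ) (ht1 : 1 ≤ t) (ht2 : t ≤ ℓ - 1)
    (hΦ : phi q ℓ d b u = phi q ℓ d b (fun i => (delta q ℓ)^[t] (u i)))
    (v w : Fin n → ℕ) (hvw : ∀ i, u i = q ^ (ℓ - t) * w i + v i ∧ v i < q ^ (ℓ - t)) :
    v ∈ Lset q (ℓ - t) d b ∧ w ∈ Lset q t d b ∧
      sigmaTuple p u = sigmaTuple p v + sigmaTuple p w := by
  obtain ⟨s, rfl⟩ : ∃ s, ℓ = s + t := ⟨ℓ - t, by omega⟩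
  rw [Nat.add_sub_cancel] at hvw ⊢
  have hq2 : 2 ≤ q := hq ▸ hp.two_le.trans (Nat.le_self_pow (by omega) p)
  obtain rfl : u = fun i => q ^ s * w i + v i := funext fun i => (hvw i).1
  have hw (i : Fin n) : w i < q ^ t := by
    refine Nat.lt_of_mul_lt_mul_left (a := q ^ s) ?_
    calc q ^ s * w i ≤ q ^ s * w i + v i := Nat.le_add_right _ _
      _ < q ^ (s + t) := Nat.lt_of_le_sub_one (by positivity) (hu.1 i)
      _ = q ^ s * q ^ t := pow_add q s t
  have hrot : (fun i => (delta q (s + t))^[t] (q ^ s * w i + v i)) = fun i => q ^ t * v i + w i :=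
    funext fun i => delta_iterate_pow_mul_add (hvw i).2 (hw i)
  rw [hrot] at hΦ
  obtain ⟨hvL, hwL⟩ := mem_Lset_of_phi_eq_swap hq2 ht1 (fun i => (hvw i).2) hw hu hΦ
  refine ⟨hvL, hwL, sigmaTuple_eq_add (K := f * s) hp.one_lt fun i => ?_⟩
  rw [pow_mul, ← hq]
  exact hvw i

/-- If `Φ_u(0) = Φ_u(t)` for some `1 ≤ t ≤ ℓ-1` and `uᵢ = q^{ℓ-t} wᵢ + vᵢ` with
`0 ≤ vᵢ < q^{ℓ-t}`, then `v ∈ L(D, q^{ℓ-t}, b_{ℓ-t})`, `w ∈ L(D, q^t, b_t)`, and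
`σ_p(u) = σ_p(v) + σ_p(w)`. -/
theorem stmt12 (p f m n : ℕ) (hp : p.Prime) (hf : 1 ≤ f) (hm : 1 ≤ m) (hn : 1 ≤ n)
    (q : ℕ) (hq : q = p ^ f)
    (d : Fin n → Fin m → ℤ) (b : Fin m → ℤ) (hb : ∀ j, 0 ≤ b j ∧ b j ≤ (q : ℤ) - 2)
    (ℓ : ℕ) (hℓ : 2 ≤ ℓ) (u : Fin n → ℕ) (hu : u ∈ Lset q ℓ d b)
    (t : ℕ) (ht1 : 1 ≤ t) (ht2 : t ≤ ℓ - 1)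
    (hΦ : phi q ℓ d b u = phi q ℓ d b (fun i => (delta q ℓ)^[t] (u i)))
    (v w : Fin n → ℕ) (hvw : ∀ i, u i = q ^ (ℓ - t) * w i + v i ∧ v i < q ^ (ℓ - t)) :
    v ∈ Lset q (ℓ - t) d b ∧ w ∈ Lset q t d b ∧
      sigmaTuple p u = sigmaTuple p v + sigmaTuple p w :=
  stmt12_general p f m n hp hf q hq d b ℓ u hu t ht1 ht2 hΦ v w hvw
end

section
/- Suppose m = 1, each d_i is a positive integer, and b ≠ 0 (so 1 ≤ b ≤ q−2). Then for every integer ℓ ≥ 1 and every u ∈ L(D, q^ℓ, b_ℓ), one has σ_p(u)·max_{1≤i≤n} σ_p(d_i) ≥ ℓ·(f(p−1) − σ_p(b)); equivalently σ_p(u) ≥ ℓ·(f(p−1) − σ_p(b))/max_{1≤i≤n} σ_p(d_i). -/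
/-!
Put `N = ∑ uᵢ dᵢ + b (1 + q + ⋯ + q^(ℓ-1))`, a positive multiple of `p^(fℓ) - 1`.
Folding the base-`p^(fℓ)` blocks of `N` onto each other keeps it a positive multiple of
`p^(fℓ) - 1`, never increases its digit sum, and ends at `p^(fℓ) - 1` itself; hence
`σ_p(N) ≥ fℓ(p-1)`. On the other hand `σ_p` is subadditive and submultiplicative and the
repunit `1 + q + ⋯ + q^(ℓ-1)` has digit sum `ℓ`, so `σ_p(N) ≤ σ_p(u) maxᵢ σ_p(dᵢ) + ℓ σ_p(b)`.
-/

open Finset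

namespace Nat

variable {p : ℕ}

theorem sub_one_mul_sum_range_div_pow_eq_sub_digits_sum (hp : 1 < p) {n K : ℕ}
    (hK : log p n < K) :
    (p - 1) * ∑ i ∈ range K, n / p ^ (i + 1) = n - (p.digits n).sum := by
  rw [← sub_one_mul_sum_log_div_pow_eq_sub_sum_digits, ← sum_subset (range_subset_range.mpr hK)]
  intro i hiK hilog
  refine Nat.div_eq_of_lt ((lt_pow_succ_log_self hp n).trans_le ?_)
  exact pow_le_pow_right₀ hp.le (by simp at hilog; omega)

theorem digits_sum_add_le (hp : 1 < p) (a b : ℕ) :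
    (p.digits (a + b)).sum ≤ (p.digits a).sum + (p.digits b).sum := by
  -- Legendre: `n - σ_p(n) = (p - 1) ∑ᵢ ⌊n / p^(i+1)⌋`, and each `⌊· / p^(i+1)⌋` is superadditive.
  have hK : log p (a + b) < log p (a + b) + 1 := lt_add_one _
  have ha := sub_one_mul_sum_range_div_pow_eq_sub_digits_sum hp
    ((log_mono_right (le_add_right a b)).trans_lt hK)
  have hb := sub_one_mul_sum_range_div_pow_eq_sub_digits_sum hp
    ((log_mono_right (le_add_left b a)).trans_lt hK)
  have hab := sub_one_mul_sum_range_div_pow_eq_sub_digits_sum hp hK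
  have hfloor : ∑ i ∈ range (log p (a + b) + 1), a / p ^ (i + 1)
      + ∑ i ∈ range (log p (a + b) + 1), b / p ^ (i + 1)
      ≤ ∑ i ∈ range (log p (a + b) + 1), (a + b) / p ^ (i + 1) := by
    rw [← sum_add_distrib]
    exact sum_le_sum fun i _ => div_add_div_le_add_div
  have hmul := Nat.mul_le_mul_left (p - 1) hfloor
  rw [mul_add, ha, hb, hab] at hmul
  have := digit_sum_le p a
  have := digit_sum_le p b
  have := digit_sum_le p (a + b)
  omega

theorem digits_sum_sum_le (hp : 1 < p) {ι : Type*} (s : Finset ι) (x : ι → ℕ) :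
    (p.digits (∑ i ∈ s, x i)).sum ≤ ∑ i ∈ s, (p.digits (x i)).sum := by
  induction s using Finset.cons_induction with
  | empty => simp
  | cons a s ha ih =>
    rw [sum_cons, sum_cons]
    exact (digits_sum_add_le hp _ _).trans (Nat.add_le_add_left ih _)

theorem digits_sum_mul_le_mul_digits_sum (hp : 1 < p) (c x : ℕ) :
    (p.digits (c * x)).sum ≤ c * (p.digits x).sum := by
  simpa using digits_sum_sum_le hp (range c) fun _ => x

theorem digits_sum_base_pow_mul (hp : 1 < p) (k m : ℕ) :
    (p.digits (p ^ k * m)).sum = (p.digits m).sum := by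
  rcases m.eq_zero_or_pos with rfl | hm
  · simp
  · simp [digits_base_pow_mul hp hm]

theorem digits_sum_eq_mod_add_digits_sum_div (hp : 1 < p) (n : ℕ) :
    (p.digits n).sum = n % p + (p.digits (n / p)).sum := by
  rcases n.eq_zero_or_pos with rfl | hn
  · simp
  · rw [digits_def' hp hn, List.sum_cons]

theorem digits_sum_mul_le (hp : 1 < p) (a x : ℕ) :
    (p.digits (a * x)).sum ≤ (p.digits a).sum * (p.digits x).sum := by
  induction a using Nat.strong_induction_on with
  | _ a ih =>
  rcases a.eq_zero_or_pos with rfl | ha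
  · simp
  have hsplit : a * x = a % p * x + p ^ 1 * (a / p * x) := by
    conv_lhs => rw [← mod_add_div a p]
    ring
  calc (p.digits (a * x)).sum
      ≤ (p.digits (a % p * x)).sum + (p.digits (a / p * x)).sum := by
        rw [hsplit, ← digits_sum_base_pow_mul hp 1 (a / p * x)]
        exact digits_sum_add_le hp _ _
    _ ≤ a % p * (p.digits x).sum + (p.digits (a / p)).sum * (p.digits x).sum :=
        Nat.add_le_add (digits_sum_mul_le_mul_digits_sum hp _ _)
          (ih _ (div_lt_self ha hp))
    _ = (p.digits a).sum * (p.digits x).sum := by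
        rw [digits_sum_eq_mod_add_digits_sum_div hp a, add_mul]

theorem digits_sum_add_base_pow_mul (hp : 1 < p) {m A B : ℕ} (hB : B < p ^ m) :
    (p.digits (B + p ^ m * A)).sum = (p.digits B).sum + (p.digits A).sum := by
  rcases A.eq_zero_or_pos with rfl | hA
  · simp
  have hlen : (p.digits B).length ≤ m := (digits_length_le_iff hp B).mpr hB
  have h := digits_append_zeroes_append_digits (k := m - (p.digits B).length) hp hA (n := B)
  rw [Nat.add_sub_cancel' hlen] at h
  simp [← h]

theorem digits_sum_base_pow_sub_one (hp : 1 < p) (m : ℕ) :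
    (p.digits (p ^ m - 1)).sum = m * (p - 1) := by
  induction m with
  | zero => simp
  | succ m ih =>
    have hpow : p ^ (m + 1) - 1 = (p - 1) + p * (p ^ m - 1) := by
      have := one_le_pow m p (by omega)
      rw [pow_succ', Nat.mul_sub_one]
      have := Nat.le_mul_of_pos_right p this
      omega
    rw [hpow, digits_add p hp _ _ (by omega) (by omega), List.sum_cons, ih]
    ring

theorem mul_sub_one_le_digits_sum_of_dvd (hp : 1 < p) {m N : ℕ} (hN : 0 < N)
    (hdvd : p ^ m - 1 ∣ N) : m * (p - 1) ≤ (p.digits N).sum := by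
  rcases m.eq_zero_or_pos with rfl | hm
  · simp
  have hpm : 1 < p ^ m := Nat.one_lt_pow hm.ne' hp
  induction N using Nat.strong_induction_on with
  | _ N ih =>
  rcases lt_or_ge N (p ^ m) with hlt | hge
  · obtain rfl : N = p ^ m - 1 := le_antisymm (by omega) (le_of_dvd hN hdvd)
    rw [digits_sum_base_pow_sub_one hp]
  obtain ⟨A, B, hB, hN_eq⟩ : ∃ A B, B < p ^ m ∧ B + p ^ m * A = N :=
    ⟨N / p ^ m, N % p ^ m, mod_lt N (by omega), mod_add_div N (p ^ m)⟩
  have hA : 0 < A := Nat.pos_of_ne_zero (by rintro rfl; omega)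
  have hN_split : N = (A + B) + (p ^ m - 1) * A := by
    rw [Nat.sub_one_mul]
    have := Nat.le_mul_of_pos_left A (by omega : 0 < p ^ m)
    omega
  calc m * (p - 1) ≤ (p.digits (A + B)).sum :=
        ih _ (by nlinarith) (by omega)
          ((Nat.dvd_add_left (dvd_mul_right _ _)).mp (hN_split ▸ hdvd))
    _ ≤ (p.digits B).sum + (p.digits A).sum := add_comm A B ▸ digits_sum_add_le hp _ _
    _ = (p.digits N).sum := by rw [← digits_sum_add_base_pow_mul hp hB, hN_eq]

theorem digits_sum_geomSum_le (hp : 1 < p) (f ℓ : ℕ) :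
    (p.digits (∑ j ∈ range ℓ, (p ^ f) ^ j)).sum ≤ ℓ := by
  have hpow (j : ℕ) : (p.digits ((p ^ f) ^ j)).sum = 1 := by
    simpa [← pow_mul, digits_of_lt p 1 one_ne_zero hp] using digits_sum_base_pow_mul hp (f * j) 1
  simpa [hpow] using digits_sum_sum_le hp (range ℓ) fun j => (p ^ f) ^ j

theorem digits_sum_sum_mul_le {ι : Type*} (hp : 1 < p) (s : Finset ι) (u d : ι → ℕ) :
    (p.digits (∑ i ∈ s, u i * d i)).sum
      ≤ (∑ i ∈ s, (p.digits (u i)).sum) * s.sup fun i => (p.digits (d i)).sum := by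
  rw [sum_mul]
  refine (digits_sum_sum_le hp _ _).trans (sum_le_sum fun i hi => ?_)
  exact (digits_sum_mul_le hp _ _).trans
    (Nat.mul_le_mul_left _ (le_sup (f := fun i => (p.digits (d i)).sum) hi))

end Nat

theorem stmt14_general (p f n : ℕ) (hp : p.Prime) (hf : 1 ≤ f)
    (q : ℕ) (hq : q = p ^ f)
    (d : Fin n → ℕ)
    (b : ℕ) (hb0 : b ≠ 0)
    (ℓ : ℕ) (hℓ : 1 ≤ ℓ) (u : Fin n → ℕ)
    (hu2 : (q ^ ℓ - 1) ∣ (∑ i, u i * d i + (q ^ ℓ - 1) / (q - 1) * b)) :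
    (ℓ : ℤ) * ((f : ℤ) * ((p : ℤ) - 1) - ((Nat.digits p b).sum : ℤ))
      ≤ (∑ i, ((Nat.digits p (u i)).sum : ℤ))
        * ((Finset.univ.sup (fun i => (Nat.digits p (d i)).sum) : ℕ) : ℤ) := by
  subst hq
  have hp1 := hp.one_lt
  have hR : ((p ^ f) ^ ℓ - 1) / (p ^ f - 1) = ∑ j ∈ range ℓ, (p ^ f) ^ j :=
    (Nat.geomSum_eq (Nat.one_lt_pow (by omega) hp1) ℓ).symm
  rw [hR, ← pow_mul] at hu2
  have hR_pos : 0 < ∑ j ∈ range ℓ, (p ^ f) ^ j :=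
    sum_pos (fun j _ => by positivity) (nonempty_range_iff.mpr (by omega))
  have hlower := Nat.mul_sub_one_le_digits_sum_of_dvd hp1 (by positivity) hu2
  have hupper := (Nat.digits_sum_add_le hp1 _ _).trans (Nat.add_le_add
    (Nat.digits_sum_sum_mul_le hp1 univ u d)
    ((Nat.digits_sum_mul_le hp1 _ b).trans
      (Nat.mul_le_mul_right _ (Nat.digits_sum_geomSum_le hp1 f ℓ))))
  have key := hlower.trans hupper
  zify [hp1.le] at key
  push_cast at key ⊢
  linarith

/-- For `m = 1`, positive exponents `dᵢ` and `b ≠ 0`, every `u ∈ L(D, q^ℓ, b_ℓ)`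
satisfies `σ_p(u)·maxᵢ σ_p(dᵢ) ≥ ℓ·(f(p−1) − σ_p(b))`. -/
theorem stmt14 (p f n : ℕ) (hp : p.Prime) (hf : 1 ≤ f) (hn : 1 ≤ n)
    (q : ℕ) (hq : q = p ^ f)
    (d : Fin n → ℕ) (hd : ∀ i, 0 < d i)
    (b : ℕ) (hb : b ≤ q - 2) (hb0 : b ≠ 0)
    (ℓ : ℕ) (hℓ : 1 ≤ ℓ) (u : Fin n → ℕ)
    (hu1 : ∀ i, u i ≤ q ^ ℓ - 1)
    (hu2 : (q ^ ℓ - 1) ∣ (∑ i, u i * d i + (q ^ ℓ - 1) / (q - 1) * b)) :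
    (ℓ : ℤ) * ((f : ℤ) * ((p : ℤ) - 1) - ((Nat.digits p b).sum : ℤ))
      ≤ (∑ i, ((Nat.digits p (u i)).sum : ℤ))
        * ((Finset.univ.sup (fun i => (Nat.digits p (d i)).sum) : ℕ) : ℤ) :=
  stmt14_general p f n hp hf q hq d b hb0 ℓ hℓ u hu2
end

section
/- Let q = p (so f = 1), let d ≥ 1 and b ∈ {1, …, p−2} be integers with d dividing p−1−b, and set s = (p−1−b)/d and D = (1, 2, …, d). Then L(D, p, b) is nonempty, the tuple u = (0, …, 0, s) (with s in the last coordinate) belongs to L(D, p, b) with σ_p(u) = s, and σ(D, p, b) = min{ σ_p(u) : u ∈ L(D, p, b) } = s. -/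
open Finset

lemma Nat.digits_sum_of_lt {p n : ℕ} (h : n < p) : (Nat.digits p n).sum = n := by
  rcases eq_or_ne n 0 with rfl | hn
  · simp
  · simp [Nat.digits_of_lt p n hn h]

section

variable {p d : ℕ}

lemma sigmaTuple_eq_sum_of_lt {u : Fin d → ℕ} (h : ∀ i, u i < p) : sigmaTuple p u = ∑ i, u i :=
  sum_congr rfl fun i _ => Nat.digits_sum_of_lt (h i)

lemma sigmaTuple_single (i : Fin d) (s : ℕ) :
    sigmaTuple p (Pi.single i s) = (Nat.digits p s).sum := by
  rw [sigmaTuple, Fintype.sum_eq_single i fun j hj => by simp [hj]]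
  simp

/-- `L(D, p, b)` for `D = (1, …, d)`: the coordinate `i : Fin d` carries the exponent `i + 1`. -/
def solutionSet (p d b : ℕ) : Set (Fin d → ℕ) :=
  {u | (∀ i, u i ≤ p - 1) ∧ (p - 1) ∣ (∑ i, u i * ((i : ℕ) + 1) + b)}

lemma single_mem_solutionSet {b s : ℕ} {i : Fin d} (hs : s ≤ p - 1)
    (hdvd : (p - 1) ∣ s * ((i : ℕ) + 1) + b) : Pi.single i s ∈ solutionSet p d b := by
  refine ⟨fun j => ?_, ?_⟩
  · rcases eq_or_ne j i with rfl | hj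
    · simpa using hs
    · simp [hj]
  · simpa [Pi.single_apply, ite_mul] using hdvd

lemma sub_le_mul_sum_of_mem_solutionSet {b : ℕ} (hb : 0 < b) {u : Fin d → ℕ}
    (hu : u ∈ solutionSet p d b) : p - 1 - b ≤ d * ∑ i, u i := by
  have hlower : p - 1 ≤ ∑ i, u i * ((i : ℕ) + 1) + b := Nat.le_of_dvd (by omega) hu.2
  have hweight : ∑ i, u i * ((i : ℕ) + 1) ≤ d * ∑ i, u i := by
    rw [mul_sum]
    exact sum_le_sum fun i _ => by rw [mul_comm]; exact Nat.mul_le_mul_right _ i.isLt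
  omega

end

theorem stmt15_general (p : ℕ) (d : ℕ)
    (b : ℕ) (hb1 : 1 ≤ b) (hb2 : b ≤ p - 2)
    (s : ℕ) (hs : p - 1 - b = d * s) :
    ({u : Fin d → ℕ | (∀ i, u i ≤ p - 1) ∧
        (p - 1) ∣ (∑ i, u i * ((i : ℕ) + 1) + b)}).Nonempty ∧
    (fun i : Fin d => if (i : ℕ) = d - 1 then s else 0) ∈
      {u : Fin d → ℕ | (∀ i, u i ≤ p - 1) ∧
        (p - 1) ∣ (∑ i, u i * ((i : ℕ) + 1) + b)} ∧
    sigmaTuple p (fun i : Fin d => if (i : ℕ) = d - 1 then s else 0) = s ∧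
    sInf (sigmaTuple p '' {u : Fin d → ℕ | (∀ i, u i ≤ p - 1) ∧
        (p - 1) ∣ (∑ i, u i * ((i : ℕ) + 1) + b)}) = s := by
  have hd : 0 < d := Nat.pos_of_ne_zero (by rintro rfl; omega)
  have hsp : s < p := by have := Nat.le_mul_of_pos_left s hd; omega
  set last : Fin d := ⟨d - 1, by omega⟩
  have hlast : (fun i : Fin d => if (i : ℕ) = d - 1 then s else 0) = Pi.single last s := by
    ext i; simp [Pi.single_apply, Fin.ext_iff, last]
  have hmem : Pi.single last s ∈ solutionSet p d b :=
    single_mem_solutionSet (by omega) <| by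
      rw [show (last : ℕ) + 1 = d from Nat.sub_add_cancel hd, mul_comm, ← hs, Nat.sub_add_cancel (by omega)]
  have hsigma : sigmaTuple p (Pi.single last s) = s := by
    rw [sigmaTuple_single, Nat.digits_sum_of_lt hsp]
  have hleast : IsLeast (sigmaTuple p '' solutionSet p d b) s := by
    refine ⟨⟨_, hmem, hsigma⟩, ?_⟩
    rintro _ ⟨u, hu, rfl⟩
    rw [sigmaTuple_eq_sum_of_lt fun i => by have := hu.1 i; omega]
    exact Nat.le_of_mul_le_mul_left (hs ▸ sub_le_mul_sum_of_mem_solutionSet hb1 hu) hd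
  rw [hlast]
  exact ⟨⟨_, hmem⟩, hmem, hsigma, hleast.csInf_eq⟩

/-- For `q = p`, `D = (1,…,d)`, `1 ≤ b ≤ p-2` with `d ∣ p-1-b` and `s = (p-1-b)/d`:
`L(D, p, b)` is nonempty, the tuple `(0,…,0,s)` lies in it with `σ_p`-weight `s`, and
`σ(D, p, b) = s`. -/
theorem stmt15 (p : ℕ) (hp : p.Prime) (d : ℕ) (hd : 1 ≤ d)
    (b : ℕ) (hb1 : 1 ≤ b) (hb2 : b ≤ p - 2)
    (s : ℕ) (hs : p - 1 - b = d * s) :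
    ({u : Fin d → ℕ | (∀ i, u i ≤ p - 1) ∧
        (p - 1) ∣ (∑ i, u i * ((i : ℕ) + 1) + b)}).Nonempty ∧
    (fun i : Fin d => if (i : ℕ) = d - 1 then s else 0) ∈
      {u : Fin d → ℕ | (∀ i, u i ≤ p - 1) ∧
        (p - 1) ∣ (∑ i, u i * ((i : ℕ) + 1) + b)} ∧
    sigmaTuple p (fun i : Fin d => if (i : ℕ) = d - 1 then s else 0) = s ∧
    sInf (sigmaTuple p '' {u : Fin d → ℕ | (∀ i, u i ≤ p - 1) ∧
        (p - 1) ∣ (∑ i, u i * ((i : ℕ) + 1) + b)}) = s :=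
  stmt15_general p d b hb1 hb2 s hs
end

section
/- Let K be a field of characteristic zero equipped with a nonarchimedean multiplicative absolute value ‖·‖. Let α_1, …, α_t and β_1, …, β_s be nonzero elements of K such that α_j ≠ β_i for all i, j. Let r > 0 be a real number and suppose that ‖Σ_{i=1}^s β_i^ℓ − Σ_{j=1}^t α_j^ℓ‖ ≤ r^ℓ for every integer ℓ ≥ 1. Then ‖α_j‖ ≤ r for every j and ‖β_i‖ ≤ r for every i. (This is the valuation bound μ(F, b) ≥ s_p(D, b) for the reciprocal zeros and poles of the L-function L(F, b, T) = ∏(1−β_i T)/∏(1−α_j T), given that v_q(S_ℓ(F, b)) ≥ ℓ·s_p(D, b) for the power sums S_ℓ(F, b) = Σ_j α_j^ℓ − Σ_i β_i^ℓ.) -/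
/-!
Write the difference of power sums as `S ℓ = ∑ₖ wₖ γₖ^ℓ` over the distinct values `γₖ` of the
`αⱼ, βᵢ`; since no `αⱼ` equals a `βᵢ`, every weight `wₖ` is, up to sign, a positive integer, hence
nonzero in characteristic zero. For a fixed value `c = γₖ`, let `P` be the monic polynomial whose
roots are the other values. Combining the shifted power sums with the coefficients of `P` kills
every other value: `∑ₗ P.coeff ℓ * S (N + ℓ) = wₖ P(c) c^N`. The ultrametric inequality bounds the
left side by `C r^N`, and `wₖ P(c) ≠ 0`, so `‖c‖^N = O(r^N)`, i.e. `‖c‖ ≤ r`.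
-/

open Finset Polynomial Filter

theorem le_of_forall_mul_pow_le {a B x r : ℝ} (ha : 0 < a) (hr : 0 < r)
    (h : ∀ N ≥ 1, a * x ^ N ≤ B * r ^ N) : x ≤ r := by
  by_contra! hrx
  have hgrow := tendsto_pow_atTop_atTop_of_one_lt ((one_lt_div hr).2 hrx)
  obtain ⟨N, hN, hN1⟩ := ((hgrow.eventually_gt_atTop (B / a)).and (eventually_ge_atTop 1)).exists
  rw [div_pow, lt_div_iff₀ (by positivity), div_mul_eq_mul_div, div_lt_iff₀ ha] at hN
  linarith [h N hN1]

theorem Polynomial.sum_coeff_mul_sum_pow_add {R ι : Type*} [CommSemiring R] (P : R[X])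
    (s : Finset ι) (m γ : ι → R) (N : ℕ) :
    ∑ ℓ ∈ range (P.natDegree + 1), P.coeff ℓ * ∑ i ∈ s, m i * γ i ^ (N + ℓ) =
      ∑ i ∈ s, m i * γ i ^ N * P.eval (γ i) := by
  simp_rw [eval_eq_sum_range, mul_sum, sum_comm (s := range _)]
  refine sum_congr rfl fun i _ => sum_congr rfl fun ℓ _ => ?_
  ring

namespace IsNonarchimedean

variable {R : Type*} [CommRing R] {v : AbsoluteValue R ℝ}

theorem apply_sum_mul_shift_le (hv : IsNonarchimedean v) {u : ℕ → R} {r : ℝ} (hr : 0 ≤ r)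
    (hu : ∀ ℓ ≥ 1, v (u ℓ) ≤ r ^ ℓ) (a : ℕ → R) (s : Finset ℕ) {N : ℕ} (hN : 1 ≤ N) :
    v (∑ ℓ ∈ s, a ℓ * u (N + ℓ)) ≤ (∑ ℓ ∈ s, v (a ℓ) * r ^ ℓ) * r ^ N := by
  obtain ⟨ℓ, hℓs, hle⟩ := hv.finset_image_add v.map_zero v.nonneg (fun ℓ => a ℓ * u (N + ℓ)) s
  rcases s.eq_empty_or_nonempty with rfl | hs
  · simp
  calc v (∑ ℓ ∈ s, a ℓ * u (N + ℓ))
      ≤ v (a ℓ) * r ^ (N + ℓ) := by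
        grw [hle, v.map_mul, hu (N + ℓ) (by omega)]
    _ = v (a ℓ) * r ^ ℓ * r ^ N := by ring
    _ ≤ (∑ ℓ ∈ s, v (a ℓ) * r ^ ℓ) * r ^ N := by
        gcongr
        exact single_le_sum (f := fun ℓ => v (a ℓ) * r ^ ℓ)
          (fun _ _ => by positivity) (hℓs hs)

variable [IsDomain R] [DecidableEq R]

theorem apply_le_of_sum_mul_pow_le (hv : IsNonarchimedean v) {ι : Type*} [Fintype ι]
    (m γ : ι → R) {r : ℝ} (hr : 0 < r) (h : ∀ ℓ ≥ 1, v (∑ i, m i * γ i ^ ℓ) ≤ r ^ ℓ) {c : R}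
    (hc : ∑ i with γ i = c, m i ≠ 0) : v c ≤ r := by
  set P : R[X] := ∏ d ∈ (univ.image γ).erase c, (X - C d)
  have hP_root : ∀ i, γ i ≠ c → P.eval (γ i) = 0 := fun i hi => by
    simp only [P, eval_prod, eval_sub, eval_X, eval_C]
    exact prod_eq_zero (mem_erase.2 ⟨hi, mem_image_of_mem γ (mem_univ i)⟩) (sub_self _)
  have hPc : P.eval c ≠ 0 := by
    simp only [P, eval_prod, eval_sub, eval_X, eval_C]
    exact prod_ne_zero_iff.2 fun d hd => sub_ne_zero.2 (ne_of_mem_erase hd).symm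
  have hannihilate : ∀ N, ∑ ℓ ∈ range (P.natDegree + 1), P.coeff ℓ * ∑ i, m i * γ i ^ (N + ℓ) =
      (∑ i with γ i = c, m i) * P.eval c * c ^ N := fun N => by
    rw [sum_coeff_mul_sum_pow_add, sum_filter, sum_mul, sum_mul]
    refine sum_congr rfl fun i _ => ?_
    by_cases hi : γ i = c
    · rw [if_pos hi, hi]; ring
    · simp [hi, hP_root i hi]
  refine le_of_forall_mul_pow_le (B := ∑ ℓ ∈ range (P.natDegree + 1), v (P.coeff ℓ) * r ^ ℓ)
    (v.pos (mul_ne_zero hc hPc)) hr fun N hN => ?_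
  rw [← v.map_pow, ← v.map_mul, ← hannihilate]
  exact hv.apply_sum_mul_shift_le hr.le h _ _ hN

end IsNonarchimedean

theorem stmt17_general (K : Type*) [Field K] [CharZero K] (v : AbsoluteValue K ℝ)
    (hna : ∀ x y : K, v (x + y) ≤ max (v x) (v y))
    (s t : ℕ) (α : Fin t → K) (β : Fin s → K)
    (hαβ : ∀ i j, α j ≠ β i)
    (r : ℝ) (hr : 0 < r)
    (hbound : ∀ ℓ : ℕ, 1 ≤ ℓ → v (∑ i, β i ^ ℓ - ∑ j, α j ^ ℓ) ≤ r ^ ℓ) :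
    (∀ j, v (α j) ≤ r) ∧ (∀ i, v (β i) ≤ r) := by
  classical
  have hS : ∀ ℓ ≥ 1, v (∑ x, (Sum.elim 1 (-1) x : K) * Sum.elim β α x ^ ℓ) ≤ r ^ ℓ :=
    fun ℓ hℓ => by simpa [Fintype.sum_sum_type, sub_eq_add_neg] using hbound ℓ hℓ
  have hweight : ∀ c, ∑ x with Sum.elim β α x = c, (Sum.elim 1 (-1) x : K) =
      (#{i | β i = c} : K) - #{j | α j = c} := fun c => by
    rw [sum_filter, Fintype.sum_sum_type, sub_eq_add_neg, ← sum_boole, ← sum_boole,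
      ← sum_neg_distrib]
    congr 1
    exact sum_congr rfl fun x _ => by split_ifs <;> simp_all
  have hv : IsNonarchimedean v := hna
  refine ⟨fun j => hv.apply_le_of_sum_mul_pow_le _ _ hr hS ?_,
    fun i => hv.apply_le_of_sum_mul_pow_le _ _ hr hS ?_⟩
  · rw [hweight, filter_false_of_mem fun i _ => (hαβ i j).symm, card_empty, Nat.cast_zero,
      zero_sub, neg_ne_zero, Nat.cast_ne_zero, ← pos_iff_ne_zero, card_pos]
    exact ⟨j, by simp⟩
  · rw [hweight, filter_false_of_mem fun j _ => hαβ i j, card_empty, Nat.cast_zero, sub_zero,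
      Nat.cast_ne_zero, ← pos_iff_ne_zero, card_pos]
    exact ⟨i, by simp⟩

/-- Let `K` be a field of characteristic zero with a nonarchimedean multiplicative
absolute value `‖·‖`. If `α₁,…,α_t, β₁,…,β_s ∈ K` are nonzero with `α_j ≠ β_i` for all
`i, j`, `r > 0`, and `‖∑ βᵢ^ℓ − ∑ αⱼ^ℓ‖ ≤ r^ℓ` for all `ℓ ≥ 1`, then all `‖αⱼ‖ ≤ r`
and all `‖βᵢ‖ ≤ r`. -/
theorem stmt17 (K : Type*) [Field K] [CharZero K] (v : AbsoluteValue K ℝ)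
    (hna : ∀ x y : K, v (x + y) ≤ max (v x) (v y))
    (s t : ℕ) (α : Fin t → K) (β : Fin s → K)
    (hα : ∀ j, α j ≠ 0) (hβ : ∀ i, β i ≠ 0)
    (hαβ : ∀ i j, α j ≠ β i)
    (r : ℝ) (hr : 0 < r)
    (hbound : ∀ ℓ : ℕ, 1 ≤ ℓ → v (∑ i, β i ^ ℓ - ∑ j, α j ^ ℓ) ≤ r ^ ℓ) :
    (∀ j, v (α j) ≤ r) ∧ (∀ i, v (β i) ≤ r) :=
  stmt17_general K v hna s t α β hαβ r hr hbound
end
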